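/- arXiv:2311.07433 — 5 statements merged into one kernel-verified Lean document; each statement's English description precedes it below -/
import Mathlib

section
/- There exists a constant C > 0 with the following property: for all lattice points r̃, ṽ ∈ 2πℤ³ with |r̃| ≥ 2π and |ṽ| ≥ 2π, and for all r, v ∈ ℝ³ with r in the cube r̃ + [−π, π]³ and v in the cube ṽ + [−π, π]³, one has | 1/((|r|² + |v|² + r·v) |r|² |v|²) − 1/((|r̃|² + |ṽ|² + r̃·ṽ) |r̃|² |ṽ|²) | ≤ C · (1/|r| + 1/|v|) / ((|r|² + |v|²) |r|² |v|²). -/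
/-!
Write `a = |r|`, `b = |v|`, `p = r·v` and `u = |r̃|`, `w = |ṽ|`, `q = r̃·ṽ`; the two kernels are
`1 / D` and `1 / E` with `D = A a²b²`, `A = a² + b² + p`, `E = B u²w²`, `B = u² + w² + q`, and
Cauchy–Schwarz gives `A ≥ (a² + b²) / 2`. In its cube `r` lies within `δ = √3 π ≤ 7π/4` of `r̃`,
so `|a - u|, |b - w| ≤ δ` and `|p - q| ≤ δ (b + u)`; since `u, w ≥ 2π ≥ 8δ/7`, the norms at the
two points agree up to a factor `8`. Then `D - E = (A - B) a²b² + B (a²b² - u²w²)` is of order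
`δ ab (a + b)(a² + b²)`, while `D E` is of order `((a² + b²) a²b²)²`, and
`|1/D - 1/E| = |D - E| / (D E)` gives the bound.
-/

open scoped RealInnerProductSpace
open Real

/-- The momentum lattice point `2πk ∈ Λ* = 2πℤ³`, viewed as an element of `ℝ³`. -/
noncomputable def lat (k : Fin 3 → ℤ) : EuclideanSpace ℝ (Fin 3) :=
  WithLp.toLp 2 (fun i => 2 * Real.pi * (k i))

def kernelDenom (a b p : ℝ) : ℝ := (a ^ 2 + b ^ 2 + p) * a ^ 2 * b ^ 2

section Scalar

variable {a b u w p q δ k : ℝ}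

lemma half_sum_sq_le_sum_sq_add (hp : |p| ≤ a * b) :
    (a ^ 2 + b ^ 2) / 2 ≤ a ^ 2 + b ^ 2 + p := by
  nlinarith [neg_abs_le p, sq_nonneg (a - b)]

lemma sum_sq_add_le (hp : |p| ≤ a * b) : a ^ 2 + b ^ 2 + p ≤ 3 / 2 * (a ^ 2 + b ^ 2) := by
  nlinarith [le_abs_self p, sq_nonneg (a - b)]

lemma half_le_kernelDenom (hp : |p| ≤ a * b) :
    (a ^ 2 + b ^ 2) * a ^ 2 * b ^ 2 / 2 ≤ kernelDenom a b p := by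
  have hA := half_sum_sq_le_sum_sq_add hp
  unfold kernelDenom
  calc (a ^ 2 + b ^ 2) * a ^ 2 * b ^ 2 / 2 = (a ^ 2 + b ^ 2) / 2 * a ^ 2 * b ^ 2 := by ring
    _ ≤ _ := by gcongr

lemma div_le_kernelDenom_of_le_mul (hk : 0 < k) (ha : 0 ≤ a) (hb : 0 ≤ b)
    (hau : a ≤ k * u) (hbw : b ≤ k * w) (hq : |q| ≤ u * w) :
    (a ^ 2 + b ^ 2) * a ^ 2 * b ^ 2 / (2 * k ^ 6) ≤ kernelDenom u w q := by
  have hS : (a ^ 2 + b ^ 2) * a ^ 2 * b ^ 2 ≤ k ^ 6 * ((u ^ 2 + w ^ 2) * u ^ 2 * w ^ 2) := by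
    have ha2 : a ^ 2 ≤ k ^ 2 * u ^ 2 := by rw [← mul_pow]; gcongr
    have hb2 : b ^ 2 ≤ k ^ 2 * w ^ 2 := by rw [← mul_pow]; gcongr
    calc (a ^ 2 + b ^ 2) * a ^ 2 * b ^ 2
        ≤ (k ^ 2 * u ^ 2 + k ^ 2 * w ^ 2) * (k ^ 2 * u ^ 2) * (k ^ 2 * w ^ 2) := by gcongr
      _ = _ := by ring
  calc (a ^ 2 + b ^ 2) * a ^ 2 * b ^ 2 / (2 * k ^ 6)
      ≤ k ^ 6 * ((u ^ 2 + w ^ 2) * u ^ 2 * w ^ 2) / (2 * k ^ 6) := by gcongr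
    _ = (u ^ 2 + w ^ 2) * u ^ 2 * w ^ 2 / 2 := by field_simp
    _ ≤ _ := half_le_kernelDenom hq

lemma abs_sq_sub_sq_le (ha : 0 ≤ a) (hu0 : 0 ≤ u) (hu : u ≤ k * a) (hau : |a - u| ≤ δ) :
    |a ^ 2 - u ^ 2| ≤ (1 + k) * δ * a := by
  calc |a ^ 2 - u ^ 2| = |a - u| * (a + u) := by
        rw [show a ^ 2 - u ^ 2 = (a - u) * (a + u) by ring, abs_mul,
          abs_of_nonneg (add_nonneg ha hu0)]
    _ ≤ δ * ((1 + k) * a) :=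
        mul_le_mul hau (by linarith) (by positivity) ((abs_nonneg _).trans hau)
    _ = _ := by ring

lemma abs_mul_sub_mul_le (hb : 0 ≤ b) (hu0 : 0 ≤ u) (hu : u ≤ k * a)
    (hau : |a - u| ≤ δ) (hbw : |b - w| ≤ δ) :
    |a * b - u * w| ≤ δ * (b + k * a) := by
  have hδ : 0 ≤ δ := (abs_nonneg _).trans hau
  calc |a * b - u * w| = |(a - u) * b + u * (b - w)| := by ring_nf
    _ ≤ |a - u| * b + u * |b - w| := by
        grw [abs_add_le, abs_mul, abs_mul, abs_of_nonneg hb, abs_of_nonneg hu0]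
    _ ≤ δ * b + (k * a) * δ := by gcongr; exact hu0.trans hu
    _ = _ := by ring

lemma abs_kernelDenom_sub_le (hk : 1 ≤ k) (ha : 0 ≤ a) (hb : 0 ≤ b) (hu0 : 0 ≤ u) (hw0 : 0 ≤ w)
    (hu : u ≤ k * a) (hw : w ≤ k * b) (hau : |a - u| ≤ δ) (hbw : |b - w| ≤ δ)
    (hpq : |p - q| ≤ δ * (b + u)) (hq : |q| ≤ u * w) :
    |kernelDenom a b p - kernelDenom u w q|
      ≤ 5 * k ^ 5 * δ * (a * b * (a + b) * (a ^ 2 + b ^ 2)) := by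
  have hδ : 0 ≤ δ := (abs_nonneg _).trans hau
  have hk2 : 1 ≤ k ^ 2 := one_le_pow₀ hk
  have hA : |(a ^ 2 + b ^ 2 + p) - (u ^ 2 + w ^ 2 + q)| ≤ 3 * k * δ * (a + b) := by
    calc |(a ^ 2 + b ^ 2 + p) - (u ^ 2 + w ^ 2 + q)|
        = |(a ^ 2 - u ^ 2) + (b ^ 2 - w ^ 2) + (p - q)| := by ring_nf
      _ ≤ |a ^ 2 - u ^ 2| + |b ^ 2 - w ^ 2| + |p - q| := abs_add_three _ _ _
      _ ≤ (1 + k) * δ * a + (1 + k) * δ * b + δ * (b + k * a) := by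
        gcongr
        · exact abs_sq_sub_sq_le ha hu0 hu hau
        · exact abs_sq_sub_sq_le hb hw0 hw hbw
        · exact hpq.trans (by gcongr)
      _ ≤ 3 * k * δ * (a + b) := by
        nlinarith [mul_nonneg (mul_nonneg (sub_nonneg.2 hk) hδ) ha,
          mul_nonneg (mul_nonneg (sub_nonneg.2 hk) hδ) hb]
  have hB : |u ^ 2 + w ^ 2 + q| ≤ 3 / 2 * k ^ 2 * (a ^ 2 + b ^ 2) := by
    have hu2 : u ^ 2 ≤ k ^ 2 * a ^ 2 := by rw [← mul_pow]; gcongr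
    have hw2 : w ^ 2 ≤ k ^ 2 * b ^ 2 := by rw [← mul_pow]; gcongr
    rw [abs_of_nonneg ((half_sum_sq_le_sum_sq_add hq).trans' (by positivity))]
    linarith [sum_sq_add_le hq]
  have hM : |a ^ 2 * b ^ 2 - u ^ 2 * w ^ 2| ≤ 2 * k ^ 3 * δ * (a * b * (a + b)) := by
    have huw : u * w ≤ k ^ 2 * (a * b) := by
      calc u * w ≤ (k * a) * (k * b) := by gcongr
        _ = _ := by ring
    calc |a ^ 2 * b ^ 2 - u ^ 2 * w ^ 2| = |a * b - u * w| * (a * b + u * w) := by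
          rw [show a ^ 2 * b ^ 2 - u ^ 2 * w ^ 2 = (a * b - u * w) * (a * b + u * w) by ring,
            abs_mul, abs_of_nonneg (show 0 ≤ a * b + u * w by positivity)]
      _ ≤ (k * δ * (a + b)) * (2 * k ^ 2 * (a * b)) := by
        gcongr
        · nlinarith [abs_mul_sub_mul_le hb hu0 hu hau hbw,
            mul_nonneg (sub_nonneg.2 hk) (mul_nonneg hδ hb)]
        · nlinarith [mul_le_mul_of_nonneg_right hk2 (mul_nonneg ha hb)]
      _ = _ := by ring
  have hab : a ^ 2 * b ^ 2 ≤ a * b * (a ^ 2 + b ^ 2) / 2 := by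
    nlinarith [mul_nonneg (mul_nonneg ha hb) (sq_nonneg (a - b))]
  calc |kernelDenom a b p - kernelDenom u w q|
      = |((a ^ 2 + b ^ 2 + p) - (u ^ 2 + w ^ 2 + q)) * (a ^ 2 * b ^ 2)
          + (u ^ 2 + w ^ 2 + q) * (a ^ 2 * b ^ 2 - u ^ 2 * w ^ 2)| := by
        unfold kernelDenom; ring_nf
    _ ≤ |(a ^ 2 + b ^ 2 + p) - (u ^ 2 + w ^ 2 + q)| * (a ^ 2 * b ^ 2)
          + |u ^ 2 + w ^ 2 + q| * |a ^ 2 * b ^ 2 - u ^ 2 * w ^ 2| := by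
        grw [abs_add_le, abs_mul _ (a ^ 2 * b ^ 2), abs_mul (u ^ 2 + w ^ 2 + q),
          abs_of_nonneg (by positivity : 0 ≤ a ^ 2 * b ^ 2)]
    _ ≤ 3 * k * δ * (a + b) * (a * b * (a ^ 2 + b ^ 2) / 2)
          + 3 / 2 * k ^ 2 * (a ^ 2 + b ^ 2) * (2 * k ^ 3 * δ * (a * b * (a + b))) := by
        gcongr
    _ = (3 / 2 * k + 3 * k ^ 5) * δ * (a * b * (a + b) * (a ^ 2 + b ^ 2)) := by ring
    _ ≤ _ := by
        gcongr
        nlinarith [pow_le_pow_right₀ hk (show 1 ≤ 5 by norm_num)]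

lemma abs_one_div_kernelDenom_sub_le (hk : 1 ≤ k) (ha : 0 < a) (hb : 0 < b)
    (hua : u ≤ k * a) (hwb : w ≤ k * b) (hau : a ≤ k * u) (hbw : b ≤ k * w)
    (hδu : |a - u| ≤ δ) (hδw : |b - w| ≤ δ) (hpq : |p - q| ≤ δ * (b + u))
    (hp : |p| ≤ a * b) (hq : |q| ≤ u * w) :
    |1 / kernelDenom a b p - 1 / kernelDenom u w q|
      ≤ 20 * k ^ 11 * δ * (1 / a + 1 / b) / ((a ^ 2 + b ^ 2) * a ^ 2 * b ^ 2) := by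
  have hu : 0 < u := pos_of_mul_pos_right (ha.trans_le hau) (by positivity)
  have hw : 0 < w := pos_of_mul_pos_right (hb.trans_le hbw) (by positivity)
  have hD := half_le_kernelDenom hp
  have hE := div_le_kernelDenom_of_le_mul (by positivity) ha.le hb.le hau hbw hq
  have hD0 : 0 < kernelDenom a b p := hD.trans_lt' (by positivity)
  have hE0 : 0 < kernelDenom u w q := hE.trans_lt' (by positivity)
  have hδ : 0 ≤ δ := (abs_nonneg _).trans hδu
  have hDE := abs_kernelDenom_sub_le hk ha.le hb.le hu.le hw.le hua hwb hδu hδw hpq hq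
  calc |1 / kernelDenom a b p - 1 / kernelDenom u w q|
      = |kernelDenom a b p - kernelDenom u w q| / (kernelDenom a b p * kernelDenom u w q) := by
        rw [div_sub_div _ _ hD0.ne' hE0.ne', abs_div, abs_of_pos (mul_pos hD0 hE0),
          abs_sub_comm]
        ring_nf
    _ ≤ 5 * k ^ 5 * δ * (a * b * (a + b) * (a ^ 2 + b ^ 2))
          / ((a ^ 2 + b ^ 2) * a ^ 2 * b ^ 2 / 2
            * ((a ^ 2 + b ^ 2) * a ^ 2 * b ^ 2 / (2 * k ^ 6))) := by
        gcongr
    _ = _ := by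
        field_simp
        ring

end Scalar

lemma abs_inner_sub_inner_le {F : Type*} [NormedAddCommGroup F] [InnerProductSpace ℝ F]
    (x y x' y' : F) : |⟪x, y⟫ - ⟪x', y'⟫| ≤ ‖x - x'‖ * ‖y‖ + ‖x'‖ * ‖y - y'‖ := by
  calc |⟪x, y⟫ - ⟪x', y'⟫| = |⟪x - x', y⟫ + ⟪x', y - y'⟫| := by
        rw [inner_sub_left, inner_sub_right]; ring_nf
    _ ≤ ‖x - x'‖ * ‖y‖ + ‖x'‖ * ‖y - y'‖ :=
        (abs_add_le _ _).trans
          (add_le_add (abs_real_inner_le_norm _ _) (abs_real_inner_le_norm _ _))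

lemma abs_one_div_kernelDenom_norm_sub_le {F : Type*} [NormedAddCommGroup F]
    [InnerProductSpace ℝ F] {x y x' y' : F} {δ : ℝ} (hδ : 0 < δ)
    (hx : ‖x - x'‖ ≤ δ) (hy : ‖y - y'‖ ≤ δ) (hx' : 8 * δ ≤ 7 * ‖x'‖) (hy' : 8 * δ ≤ 7 * ‖y'‖) :
    |1 / kernelDenom ‖x‖ ‖y‖ ⟪x, y⟫ - 1 / kernelDenom ‖x'‖ ‖y'‖ ⟪x', y'⟫|
      ≤ 20 * 8 ^ 11 * δ * (1 / ‖x‖ + 1 / ‖y‖) / ((‖x‖ ^ 2 + ‖y‖ ^ 2) * ‖x‖ ^ 2 * ‖y‖ ^ 2) := by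
  have hδx := (abs_norm_sub_norm_le x x').trans hx
  have hδy := (abs_norm_sub_norm_le y y').trans hy
  obtain ⟨hx₁, hx₂⟩ := abs_le.mp hδx
  obtain ⟨hy₁, hy₂⟩ := abs_le.mp hδy
  refine abs_one_div_kernelDenom_sub_le (by norm_num) (by linarith) (by linarith)
    (by linarith) (by linarith) (by linarith) (by linarith) hδx hδy ?_
    (abs_real_inner_le_norm x y) (abs_real_inner_le_norm x' y')
  calc |⟪x, y⟫ - ⟪x', y'⟫| ≤ ‖x - x'‖ * ‖y‖ + ‖x'‖ * ‖y - y'‖ := abs_inner_sub_inner_le ..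
    _ ≤ δ * ‖y‖ + ‖x'‖ * δ := by gcongr
    _ = δ * (‖y‖ + ‖x'‖) := by ring

lemma EuclideanSpace.norm_le_sqrt_card_mul {ι : Type*} [Fintype ι] {δ : ℝ} (hδ : 0 ≤ δ)
    (x : EuclideanSpace ℝ ι) (h : ∀ i, |x i| ≤ δ) : ‖x‖ ≤ √(Fintype.card ι) * δ := by
  rw [EuclideanSpace.norm_eq, ← Real.sqrt_sq hδ, ← Real.sqrt_mul (Nat.cast_nonneg _)]
  gcongr
  calc ∑ i, ‖x i‖ ^ 2 ≤ ∑ _i : ι, δ ^ 2 := by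
        gcongr with i
        exact (Real.norm_eq_abs _).trans_le (h i)
    _ = _ := by simp

/-- There exists `C > 0` such that for all lattice points
`r̃, ṽ ∈ 2πℤ³` with `|r̃| ≥ 2π`, `|ṽ| ≥ 2π`, and all `r, v ∈ ℝ³` in the cubes
`r̃ + [−π,π]³` and `ṽ + [−π,π]³` respectively, the difference of the kernel
`1/((|r|² + |v|² + r·v)|r|²|v|²)` at `(r,v)` and at `(r̃,ṽ)` is bounded by
`C·(1/|r| + 1/|v|)/((|r|² + |v|²)|r|²|v|²)`. -/
theorem kernel_pointwise_lattice_comparison :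
    ∃ C > 0, ∀ rt vt : Fin 3 → ℤ, ∀ r v : EuclideanSpace ℝ (Fin 3),
      2 * Real.pi ≤ ‖lat rt‖ → 2 * Real.pi ≤ ‖lat vt‖ →
      (∀ i : Fin 3, |r i - lat rt i| ≤ Real.pi) →
      (∀ i : Fin 3, |v i - lat vt i| ≤ Real.pi) →
      |1 / ((‖r‖ ^ 2 + ‖v‖ ^ 2 + ⟪r, v⟫) * ‖r‖ ^ 2 * ‖v‖ ^ 2)
          - 1 / ((‖lat rt‖ ^ 2 + ‖lat vt‖ ^ 2 + ⟪lat rt, lat vt⟫)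
              * ‖lat rt‖ ^ 2 * ‖lat vt‖ ^ 2)|
        ≤ C * (1 / ‖r‖ + 1 / ‖v‖) / ((‖r‖ ^ 2 + ‖v‖ ^ 2) * ‖r‖ ^ 2 * ‖v‖ ^ 2) := by
  refine ⟨20 * 8 ^ 11 * (7 * π / 4), by positivity, fun rt vt r v hrt hvt hr hv => ?_⟩
  have hcube : ∀ x y : EuclideanSpace ℝ (Fin 3), (∀ i, |x i - y i| ≤ π) → ‖x - y‖ ≤ 7 * π / 4 :=
    fun x y h => by
      have hsqrt : √3 ≤ 7 / 4 := Real.sqrt_le_iff.mpr ⟨by norm_num, by norm_num⟩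
      calc ‖x - y‖ ≤ √(Fintype.card (Fin 3)) * π :=
            EuclideanSpace.norm_le_sqrt_card_mul pi_pos.le (x - y) (by simpa using h)
        _ ≤ 7 * π / 4 := by simp only [Fintype.card_fin, Nat.cast_ofNat]; nlinarith [pi_pos]
  exact abs_one_div_kernelDenom_norm_sub_le (by positivity) (hcube _ _ hr) (hcube _ _ hv)
    (by linarith) (by linarith)
end

section
/- There exists a constant C > 0 such that for every r ∈ Λ*₊ one has Σ_{v ∈ Λ*₊} 1 / ((|r|² + |v|²) |v|²) ≤ C / |r|. -/
open scoped RealInnerProductSpace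
open Real MeasureTheory

/-!
Decompose `ℤ³ \ {0}` into the hollow sup-norm boxes `{‖v‖_∞ = n + 1}`. Such a box has at most
`26 (n + 1)²` points, each with `|2πv| ≥ 2π(n + 1)`, so it contributes `O(1 / (|r|² + (n + 1)²))`.
Summing over `n` leaves the one-dimensional series `∑ 1 / (s² + n²) ≤ 2 / s`, which follows by
comparison with the telescoping series `∑ 2 / ((s + n - 1)(s + n))`.
-/

open Finset

theorem sum_range_one_div_sq_add_succ_sq_le {s : ℝ} (hs : 0 < s) (N : ℕ) :
    ∑ n ∈ range N, 1 / (s ^ 2 + ((n : ℝ) + 1) ^ 2) ≤ 2 / s := by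
  have hterm (n : ℕ) :
      1 / (s ^ 2 + ((n : ℝ) + 1) ^ 2) ≤ 2 / (s + n) - 2 / (s + (n + 1 : ℕ)) := by
    have hn : (0 : ℝ) ≤ n := n.cast_nonneg
    rw [Nat.cast_succ, div_sub_div _ _ (by positivity) (by positivity),
      div_le_div_iff₀ (by positivity) (by positivity)]
    nlinarith [sq_nonneg (s - n - 1)]
  calc ∑ n ∈ range N, 1 / (s ^ 2 + ((n : ℝ) + 1) ^ 2)
      ≤ ∑ n ∈ range N, (2 / (s + n) - 2 / (s + (n + 1 : ℕ))) := sum_le_sum fun n _ => hterm n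
    _ = 2 / s - 2 / (s + N) := by rw [sum_range_sub' (fun n : ℕ => 2 / (s + n))]; simp
    _ ≤ 2 / s := sub_le_self _ (by positivity)

theorem sum_Icc_neg_natCast_eq_sum_range_box {α M : Type*} [Ring α] [PartialOrder α]
    [IsOrderedRing α] [LocallyFiniteOrder α] [DecidableEq α] [AddCommMonoid M] (f : α → M)
    (N : ℕ) : ∑ x ∈ Icc (-(N : α)) N, f x = ∑ n ∈ range (N + 1), ∑ x ∈ box n, f x := by
  induction N with
  | zero => simp
  | succ N ih =>
    rw [← Nat.succ_eq_add_one, ← box_succ_disjUnion, sum_disjUnion, ih, sum_range_succ _ (N + 1),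
      add_comm]

theorem exists_subset_Icc_neg_natCast {ι : Type*} [Fintype ι] [DecidableEq ι] (s : Finset (ι → ℤ)) :
    ∃ N : ℕ, s ⊆ Icc (-(N : ι → ℤ)) N := by
  refine ⟨s.sup fun v => univ.sup fun i => (v i).natAbs, fun v hv => ?_⟩
  have hle (i : ι) : (v i).natAbs ≤ s.sup fun v => univ.sup fun i => (v i).natAbs :=
    (le_sup (f := fun i => (v i).natAbs) (mem_univ i)).trans
      (le_sup (f := fun v => univ.sup fun i => (v i).natAbs) hv)
  simp only [mem_Icc, Pi.le_def, Pi.neg_apply, Pi.natCast_apply, ← forall_and]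
  exact fun i => by have := hle i; omega

theorem card_box_succ_le (n : ℕ) : #(box (n + 1) : Finset (Fin 3 → ℤ)) ≤ 26 * (n + 1) ^ 2 := by
  rw [box_succ_eq_sdiff, card_sdiff_of_subset (Icc_subset_Icc (by simp) (by simp)),
    Pi.card_Icc, Pi.card_Icc]
  simp only [Pi.neg_apply, Pi.natCast_apply, Int.card_Icc, prod_const, card_univ,
    Fintype.card_fin]
  rw [show ((n.succ : ℤ) + 1 - -n.succ).toNat = 2 * n + 3 by omega,
    show ((n : ℤ) + 1 - -n).toNat = 2 * n + 1 by omega, Nat.sub_le_iff_le_add]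
  ring_nf
  omega

theorem exists_le_abs_of_mem_box_succ {ι : Type*} [Fintype ι] [DecidableEq ι] {n : ℕ}
    {v : ι → ℤ} (hv : v ∈ box (n + 1)) : ∃ i, (n + 1 : ℤ) ≤ |v i| := by
  rw [box_succ_eq_sdiff, mem_sdiff, mem_Icc, mem_Icc] at hv
  simp only [Pi.le_def, Pi.neg_apply, Pi.natCast_apply, not_and_or, not_forall] at hv
  obtain ⟨-, ⟨i, hi⟩ | ⟨i, hi⟩⟩ := hv <;> exact ⟨i, le_abs.mpr (by omega)⟩

theorem two_pi_mul_abs_le_norm_lat (v : Fin 3 → ℤ) (i : Fin 3) :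
    2 * π * |(v i : ℝ)| ≤ ‖lat v‖ := by
  simpa [lat, abs_mul, abs_of_pos pi_pos] using PiLp.norm_apply_le (lat v) i

theorem norm_lat_pos {v : Fin 3 → ℤ} (hv : v ≠ 0) : 0 < ‖lat v‖ := by
  obtain ⟨i, hi⟩ := Function.ne_iff.mp hv
  have : (0 : ℝ) < |(v i : ℝ)| := abs_pos.mpr (Int.cast_ne_zero.mpr hi)
  exact lt_of_lt_of_le (by positivity) (two_pi_mul_abs_le_norm_lat v i)

noncomputable def resolventSummand (a : ℝ) (v : Fin 3 → ℤ) : ℝ :=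
  if v ≠ 0 then 1 / ((a + ‖lat v‖ ^ 2) * ‖lat v‖ ^ 2) else 0

theorem resolventSummand_nonneg {a : ℝ} (ha : 0 ≤ a) (v : Fin 3 → ℤ) :
    0 ≤ resolventSummand a v := by
  unfold resolventSummand
  split_ifs <;> positivity

theorem sum_box_succ_resolventSummand_le {a : ℝ} (ha : 0 ≤ a) (n : ℕ) :
    ∑ v ∈ box (n + 1), resolventSummand a v ≤ 13 / (2 * π ^ 2) / (a + ((n : ℝ) + 1) ^ 2) := by
  set t : ℝ := 2 * π * ((n : ℝ) + 1)
  have ht : 0 < t := by positivity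
  have hterm : ∀ v ∈ (box (n + 1) : Finset (Fin 3 → ℤ)),
      resolventSummand a v ≤ 1 / ((a + t ^ 2) * t ^ 2) := by
    intro v hv
    obtain ⟨i, hi⟩ := exists_le_abs_of_mem_box_succ hv
    have hv0 : v ≠ 0 := by rintro rfl; simp at hi; omega
    have hle : t ≤ ‖lat v‖ :=
      (mul_le_mul_of_nonneg_left (by exact_mod_cast hi) (by positivity)).trans
        (two_pi_mul_abs_le_norm_lat v i)
    rw [resolventSummand, if_pos hv0]
    gcongr
  calc ∑ v ∈ box (n + 1), resolventSummand a v
      ≤ #(box (n + 1) : Finset (Fin 3 → ℤ)) • (1 / ((a + t ^ 2) * t ^ 2)) :=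
        sum_le_card_nsmul _ _ _ hterm
    _ ≤ (26 * ((n : ℝ) + 1) ^ 2) * (1 / ((a + t ^ 2) * t ^ 2)) := by
      rw [nsmul_eq_mul]
      gcongr
      exact_mod_cast card_box_succ_le n
    _ = 13 / (2 * π ^ 2) / (a + t ^ 2) := by
      field_simp
      ring
    _ ≤ 13 / (2 * π ^ 2) / (a + ((n : ℝ) + 1) ^ 2) := by
      gcongr
      nlinarith [pi_gt_three]

theorem sum_Icc_resolventSummand_le {s : ℝ} (hs : 0 < s) (N : ℕ) :
    ∑ v ∈ Icc (-(N : Fin 3 → ℤ)) N, resolventSummand (s ^ 2) v ≤ 13 / π ^ 2 / s := by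
  rw [sum_Icc_neg_natCast_eq_sum_range_box, sum_range_succ']
  calc ∑ n ∈ range N, ∑ v ∈ box (n + 1), resolventSummand (s ^ 2) v
        + ∑ v ∈ box 0, resolventSummand (s ^ 2) v
      ≤ ∑ n ∈ range N, 13 / (2 * π ^ 2) * (1 / (s ^ 2 + ((n : ℝ) + 1) ^ 2)) := by
        simp only [box_zero, sum_singleton, resolventSummand, ne_eq, not_true_eq_false, if_false,
          add_zero, mul_one_div]
        exact sum_le_sum fun n _ => sum_box_succ_resolventSummand_le (by positivity) n
    _ ≤ 13 / (2 * π ^ 2) * (2 / s) := by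
        rw [← mul_sum]
        gcongr
        exact sum_range_one_div_sq_add_succ_sq_le hs N
    _ = 13 / π ^ 2 / s := by field_simp

/-- There exists `C > 0` such that for every `r ∈ Λ*₊`,
`Σ_{v ∈ Λ*₊} 1/((|r|² + |v|²)|v|²) ≤ C/|r|`. -/
theorem lattice_sum_resolvent_bound :
    ∃ C > 0, ∀ r : Fin 3 → ℤ, r ≠ 0 →
      (∑' v : Fin 3 → ℤ,
          if v ≠ 0 then 1 / ((‖lat r‖ ^ 2 + ‖lat v‖ ^ 2) * ‖lat v‖ ^ 2) else 0)
        ≤ C / ‖lat r‖ := by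
  refine ⟨13 / π ^ 2, by positivity, fun r hr => ?_⟩
  have hr : 0 < ‖lat r‖ := norm_lat_pos hr
  refine tsum_le_of_sum_le' (by positivity) fun s => ?_
  obtain ⟨N, hN⟩ := exists_subset_Icc_neg_natCast s
  calc ∑ v ∈ s, resolventSummand (‖lat r‖ ^ 2) v
      ≤ ∑ v ∈ Icc (-(N : Fin 3 → ℤ)) N, resolventSummand (‖lat r‖ ^ 2) v :=
        sum_le_sum_of_subset_of_nonneg hN fun v _ _ => resolventSummand_nonneg (by positivity) v
    _ ≤ 13 / π ^ 2 / ‖lat r‖ := sum_Icc_resolventSummand_le hr N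
end

section
/- There exists a constant C > 0 such that for every v ∈ Λ*₊ one has Σ_{s ∈ Λ*₊, s ≠ −v} 1 / (|s|² |s + v|²) ≤ C / |v|. -/
open scoped RealInnerProductSpace
open Real MeasureTheory

/-!
Write `a = |s|`, `b = |s + v|` and `V = |v| ≤ a + b`. If `a ≤ b` then `b ≥ V/2`, so the summand
`1/(a²b²)` is at most both `4/(V²a²)` and `1/a⁴`; symmetrically if `b ≤ a`. Hence the sum is at
most twice `Σ_t g(|t|)` with `g(x) = min(4/(V²x²), 1/x⁴)`. Grouping `t ∈ ℤ³` into sup-norm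
shells, which have `O(n²)` points, this is `O(Σ_n min(1/V², 1/n²)) = O(1/V)`: the first branch
contributes for `n ≤ V`, the second for the tail `n > V`.
-/

open Finset

section IntCube

variable {ι : Type*} [Fintype ι]

def intSupNorm (t : ι → ℤ) : ℕ := univ.sup fun i => (t i).natAbs

noncomputable def intCube (ι : Type*) [Fintype ι] [DecidableEq ι] (n : ℕ) : Finset (ι → ℤ) :=
  Fintype.piFinset fun _ => Icc (-n : ℤ) n

lemma intSupNorm_le_iff {t : ι → ℤ} {n : ℕ} : intSupNorm t ≤ n ↔ ∀ i, (t i).natAbs ≤ n := by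
  simp [intSupNorm]

lemma intSupNorm_eq_zero_iff {t : ι → ℤ} : intSupNorm t = 0 ↔ t = 0 := by
  rw [← Nat.le_zero, intSupNorm_le_iff]
  simp [funext_iff]

lemma exists_natAbs_eq_intSupNorm [Nonempty ι] (t : ι → ℤ) :
    ∃ i, (t i).natAbs = intSupNorm t := by
  obtain ⟨i, -, hi⟩ := exists_mem_eq_sup univ univ_nonempty fun i => (t i).natAbs
  exact ⟨i, hi.symm⟩

lemma mem_intCube [DecidableEq ι] {t : ι → ℤ} {n : ℕ} : t ∈ intCube ι n ↔ intSupNorm t ≤ n := by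
  simp only [intCube, Fintype.mem_piFinset, mem_Icc, intSupNorm_le_iff]
  exact forall_congr' fun i => by omega

lemma card_intCube [DecidableEq ι] (n : ℕ) : #(intCube ι n) = (2 * n + 1) ^ Fintype.card ι := by
  simp only [intCube, Fintype.card_piFinset, Int.card_Icc, prod_const, card_univ]
  congr
  omega

lemma card_filter_intSupNorm_eq_le [DecidableEq ι] (s : Finset (ι → ℤ)) {n : ℕ} (hn : n ≠ 0) :
    #{t ∈ s | intSupNorm t = n} ≤ (2 * n + 1) ^ Fintype.card ι - (2 * n - 1) ^ Fintype.card ι := by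
  have hsub : intCube ι (n - 1) ⊆ intCube ι n := fun t ht => by
    rw [mem_intCube] at *
    omega
  have hshell : {t ∈ s | intSupNorm t = n} ⊆ intCube ι n \ intCube ι (n - 1) := fun t ht => by
    rw [mem_filter] at ht
    rw [mem_sdiff, mem_intCube, mem_intCube]
    omega
  calc #{t ∈ s | intSupNorm t = n} ≤ #(intCube ι n \ intCube ι (n - 1)) := card_le_card hshell
    _ = _ := by rw [card_sdiff_of_subset hsub, card_intCube, card_intCube]; congr 2; omega

end IntCube

lemma card_filter_intSupNorm_eq_le_fin_three (s : Finset (Fin 3 → ℤ)) {n : ℕ} (hn : n ≠ 0) :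
    #{t ∈ s | intSupNorm t = n} ≤ 26 * n ^ 2 := by
  refine (card_filter_intSupNorm_eq_le s hn).trans ?_
  obtain ⟨m, rfl⟩ := Nat.exists_eq_succ_of_ne_zero hn
  rw [Fintype.card_fin, tsub_le_iff_right]
  have : 2 * (m + 1) - 1 = 2 * m + 1 := by omega
  rw [Nat.succ_eq_add_one, this]
  nlinarith

lemma sum_le_of_le_intSupNorm {F : (Fin 3 → ℤ) → ℝ} {h : ℕ → ℝ} {B : ℝ} (hF : 0 ≤ F)
    (hFh : ∀ t, F t ≤ h (intSupNorm t)) (hh : 0 ≤ h) (hh0 : h 0 = 0)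
    (hB : ∀ M, ∑ n ∈ range M, (n : ℝ) ^ 2 * h n ≤ B) (u : Finset (Fin 3 → ℤ)) :
    ∑ t ∈ u, F t ≤ 26 * B := by
  set M := u.sup intSupNorm
  have hu : u ⊆ intCube (Fin 3) M := fun t ht => mem_intCube.2 (le_sup ht)
  have hmaps : ∀ t ∈ intCube (Fin 3) M, intSupNorm t ∈ range (M + 1) := fun t ht =>
    mem_range.2 (Nat.lt_succ_of_le (mem_intCube.1 ht))
  have hshell (n : ℕ) :
      (#{t ∈ intCube (Fin 3) M | intSupNorm t = n} : ℝ) * h n ≤ 26 * (n ^ 2 * h n) := by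
    rcases eq_or_ne n 0 with rfl | hn
    · simp [hh0]
    · rw [← mul_assoc]
      gcongr
      · exact hh n
      · exact_mod_cast card_filter_intSupNorm_eq_le_fin_three _ hn
  calc ∑ t ∈ u, F t ≤ ∑ t ∈ intCube (Fin 3) M, F t :=
        sum_le_sum_of_subset_of_nonneg hu fun t _ _ => hF t
    _ ≤ ∑ t ∈ intCube (Fin 3) M, h (intSupNorm t) := sum_le_sum fun t _ => hFh t
    _ = ∑ n ∈ range (M + 1), (#{t ∈ intCube (Fin 3) M | intSupNorm t = n} : ℝ) * h n := by
        rw [← sum_fiberwise_of_maps_to' hmaps]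
        simp only [sum_const, nsmul_eq_mul]
    _ ≤ ∑ n ∈ range (M + 1), 26 * ((n : ℝ) ^ 2 * h n) := sum_le_sum fun n _ => hshell n
    _ ≤ 26 * B := by rw [← mul_sum]; gcongr; exact hB _

/-- At `x = 0` this is `0` (as `a / 0 = 0`), so the origin contributes nothing to lattice sums. -/
noncomputable def convolutionMajorant (V x : ℝ) : ℝ := min (4 / (V ^ 2 * x ^ 2)) (1 / x ^ 4)

lemma convolutionMajorant_nonneg (V x : ℝ) : 0 ≤ convolutionMajorant V x :=
  le_min (by positivity) (by positivity)

lemma convolutionMajorant_anti (V : ℝ) {x y : ℝ} (hx : 0 < x) (hxy : x ≤ y) :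
    convolutionMajorant V y ≤ convolutionMajorant V x := by
  refine min_le_min ?_ (by gcongr)
  rcases eq_or_ne V 0 with rfl | hV
  · simp
  · gcongr

lemma one_div_sq_mul_sq_le_convolutionMajorant {V a b : ℝ} (hV : 0 < V) (ha : 0 < a)
    (hab : a ≤ b) (hVab : V ≤ a + b) : 1 / (a ^ 2 * b ^ 2) ≤ convolutionMajorant V a := by
  have hb : 0 < b := ha.trans_le hab
  refine le_min ?_ ?_
  · rw [div_le_div_iff₀ (by positivity) (by positivity)]
    have : V ^ 2 ≤ (2 * b) ^ 2 := by gcongr; linarith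
    nlinarith [sq_nonneg a]
  · rw [show a ^ 4 = a ^ 2 * a ^ 2 by ring]
    gcongr

lemma one_div_sq_mul_sq_le_convolutionMajorant_add {V a b : ℝ} (hV : 0 < V) (ha : 0 < a)
    (hb : 0 < b) (hVab : V ≤ a + b) :
    1 / (a ^ 2 * b ^ 2) ≤ convolutionMajorant V a + convolutionMajorant V b := by
  rcases le_total a b with hab | hba
  · linarith [one_div_sq_mul_sq_le_convolutionMajorant hV ha hab hVab,
      convolutionMajorant_nonneg V b]
  · rw [mul_comm]
    linarith [one_div_sq_mul_sq_le_convolutionMajorant hV hb hba (by linarith),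
      convolutionMajorant_nonneg V a]

lemma sq_mul_convolutionMajorant_le_left (V x : ℝ) :
    x ^ 2 * convolutionMajorant V x ≤ 4 / V ^ 2 := by
  rcases eq_or_ne x 0 with rfl | hx
  · simp; positivity
  calc x ^ 2 * convolutionMajorant V x ≤ x ^ 2 * (4 / (V ^ 2 * x ^ 2)) := by
        gcongr; exact min_le_left _ _
    _ = 4 / V ^ 2 := by field_simp

lemma sq_mul_convolutionMajorant_le_right (V x : ℝ) :
    x ^ 2 * convolutionMajorant V x ≤ (x ^ 2)⁻¹ := by
  rcases eq_or_ne x 0 with rfl | hx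
  · simp
  calc x ^ 2 * convolutionMajorant V x ≤ x ^ 2 * (1 / x ^ 4) := by
        gcongr; exact min_le_right _ _
    _ = (x ^ 2)⁻¹ := by field_simp

lemma sum_range_sq_mul_convolutionMajorant_le {V : ℝ} (hV : 0 < V) (M : ℕ) :
    ∑ n ∈ range M, (n : ℝ) ^ 2 * convolutionMajorant V n ≤ 6 / V := by
  set N := ⌊V⌋₊
  set f : ℕ → ℝ := fun n => (n : ℝ) ^ 2 * convolutionMajorant V n
  have hf : ∀ n, 0 ≤ f n := fun n => mul_nonneg (sq_nonneg _) (convolutionMajorant_nonneg _ _)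
  have hsplit : (range M).erase 0 ⊆ Icc 1 N ∪ Ioo N M := fun n hn => by
    simp only [mem_erase, mem_range] at hn
    simp only [mem_union, mem_Icc, mem_Ioo]
    omega
  have hlow : ∑ n ∈ Icc 1 N, f n ≤ 4 / V := calc
    ∑ n ∈ Icc 1 N, f n ≤ ∑ n ∈ Icc 1 N, 4 / V ^ 2 :=
        sum_le_sum fun n _ => sq_mul_convolutionMajorant_le_left V n
    _ = N * (4 / V ^ 2) := by simp
    _ ≤ V * (4 / V ^ 2) := by gcongr; exact Nat.floor_le hV.le
    _ = 4 / V := by field_simp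
  have hhigh : ∑ n ∈ Ioo N M, f n ≤ 2 / V := calc
    ∑ n ∈ Ioo N M, f n ≤ ∑ n ∈ Ioo N M, ((n : ℝ) ^ 2)⁻¹ :=
        sum_le_sum fun n _ => sq_mul_convolutionMajorant_le_right V n
    _ ≤ 2 / (N + 1) := sum_Ioo_inv_sq_le N M
    _ ≤ 2 / V := by gcongr; exact (Nat.lt_floor_add_one V).le
  calc ∑ n ∈ range M, f n = ∑ n ∈ (range M).erase 0, f n := (sum_erase _ (by simp [f])).symm
    _ ≤ ∑ n ∈ Icc 1 N ∪ Ioo N M, f n := sum_le_sum_of_subset_of_nonneg hsplit fun n _ _ => hf n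
    _ = ∑ n ∈ Icc 1 N, f n + ∑ n ∈ Ioo N M, f n := by
        rw [sum_union]
        exact disjoint_left.2 fun n h1 h2 => by simp only [mem_Icc, mem_Ioo] at h1 h2; omega
    _ ≤ 4 / V + 2 / V := add_le_add hlow hhigh
    _ = 6 / V := by ring

lemma lat_add (s t : Fin 3 → ℤ) : lat (s + t) = lat s + lat t := by
  ext i
  simp only [lat, Pi.add_apply, PiLp.add_apply, Int.cast_add]
  ring

lemma intSupNorm_le_norm_lat (t : Fin 3 → ℤ) : (intSupNorm t : ℝ) ≤ ‖lat t‖ := by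
  obtain ⟨i, hi⟩ := exists_natAbs_eq_intSupNorm t
  calc (intSupNorm t : ℝ) = |(t i : ℝ)| := by rw [← hi, Nat.cast_natAbs, Int.cast_abs]
    _ ≤ 2 * π * |(t i : ℝ)| := le_mul_of_one_le_left (abs_nonneg _) (by linarith [pi_gt_three])
    _ = ‖lat t i‖ := by simp [lat, abs_of_pos pi_pos]
    _ ≤ ‖lat t‖ := PiLp.norm_apply_le _ i

lemma norm_lat_pos_s7 {t : Fin 3 → ℤ} (ht : t ≠ 0) : 0 < ‖lat t‖ := by
  have : (1 : ℝ) ≤ intSupNorm t := by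
    exact_mod_cast Nat.one_le_iff_ne_zero.2 (intSupNorm_eq_zero_iff.not.2 ht)
  linarith [intSupNorm_le_norm_lat t]

lemma convolutionMajorant_norm_lat_le (V : ℝ) (t : Fin 3 → ℤ) :
    convolutionMajorant V ‖lat t‖ ≤ convolutionMajorant V (intSupNorm t) := by
  rcases eq_or_ne t 0 with rfl | ht
  · simp [lat, ← Pi.zero_def, intSupNorm_eq_zero_iff.2 rfl]
  · refine convolutionMajorant_anti V ?_ (intSupNorm_le_norm_lat t)
    exact_mod_cast Nat.pos_of_ne_zero (intSupNorm_eq_zero_iff.not.2 ht)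

lemma norm_lat_le_add (s v : Fin 3 → ℤ) : ‖lat v‖ ≤ ‖lat s‖ + ‖lat (s + v)‖ := calc
  ‖lat v‖ = ‖lat (s + v) - lat s‖ := by rw [lat_add, add_sub_cancel_left]
  _ ≤ ‖lat (s + v)‖ + ‖lat s‖ := norm_sub_le _ _
  _ = ‖lat s‖ + ‖lat (s + v)‖ := add_comm _ _

lemma convolution_summand_le (v s : Fin 3 → ℤ) (hv : v ≠ 0) :
    (if s ≠ 0 ∧ s ≠ -v then 1 / (‖lat s‖ ^ 2 * ‖lat (s + v)‖ ^ 2) else 0) ≤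
      convolutionMajorant ‖lat v‖ ‖lat s‖ + convolutionMajorant ‖lat v‖ ‖lat (s + v)‖ := by
  split_ifs with hs
  · obtain ⟨hs0, hsv⟩ := hs
    have hsv0 : s + v ≠ 0 := fun h => hsv (eq_neg_of_add_eq_zero_left h)
    exact one_div_sq_mul_sq_le_convolutionMajorant_add (norm_lat_pos_s7 hv) (norm_lat_pos_s7 hs0)
      (norm_lat_pos_s7 hsv0) (norm_lat_le_add s v)
  · exact add_nonneg (convolutionMajorant_nonneg _ _) (convolutionMajorant_nonneg _ _)

lemma sum_convolutionMajorant_norm_lat_le {V : ℝ} (hV : 0 < V) (u : Finset (Fin 3 → ℤ)) :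
    ∑ t ∈ u, convolutionMajorant V ‖lat t‖ ≤ 156 / V := by
  have := sum_le_of_le_intSupNorm (fun t => convolutionMajorant_nonneg V ‖lat t‖)
    (convolutionMajorant_norm_lat_le V) (fun n => convolutionMajorant_nonneg _ _)
    (by simp [convolutionMajorant]) (sum_range_sq_mul_convolutionMajorant_le hV) u
  exact this.trans_eq (by ring)

/-- There exists `C > 0` such that for every `v ∈ Λ*₊`,
`Σ_{s ∈ Λ*₊, s ≠ −v} 1/(|s|²|s+v|²) ≤ C/|v|`. -/
theorem lattice_convolution_bound :
    ∃ C > 0, ∀ v : Fin 3 → ℤ, v ≠ 0 →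
      (∑' s : Fin 3 → ℤ,
          if s ≠ 0 ∧ s ≠ -v then 1 / (‖lat s‖ ^ 2 * ‖lat (s + v)‖ ^ 2) else 0)
        ≤ C / ‖lat v‖ := by
  refine ⟨312, by norm_num, fun v hv => ?_⟩
  set G : (Fin 3 → ℤ) → ℝ := fun t => convolutionMajorant ‖lat v‖ ‖lat t‖
  have hG (u : Finset (Fin 3 → ℤ)) : ∑ t ∈ u, G t ≤ 156 / ‖lat v‖ :=
    sum_convolutionMajorant_norm_lat_le (norm_lat_pos_s7 hv) u
  refine Real.tsum_le_of_sum_le (fun s => by positivity) fun u => ?_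
  calc _ ≤ ∑ s ∈ u, G s + ∑ s ∈ u.map (addRightEmbedding v), G s := by
        rw [sum_map, ← sum_add_distrib]
        exact sum_le_sum fun s _ => convolution_summand_le v s hv
    _ ≤ 156 / ‖lat v‖ + 156 / ‖lat v‖ := add_le_add (hG _) (hG _)
    _ = 312 / ‖lat v‖ := by ring
end

section
/- For every K > 0 there exists a constant C > 0 such that the following holds for every real N ≥ 1: if Φ : Λ*₊ → ℝ and Φ₀ ∈ ℝ satisfy 0 ≤ Φ(p) ≤ K for all p, 0 ≤ Φ₀ ≤ K, and |Φ(p) − Φ₀| ≤ K |p|²/N² for all p ∈ Λ*₊, then Σ_{p ∈ Λ*₊} | [Φ(p) + |p|² − √(|p|⁴ + 2|p|²Φ(p)) − Φ(p)²/(2|p|²)] − [Φ₀ + |p|² − √(|p|⁴ + 2|p|²Φ₀) − Φ₀²/(2|p|²)] | ≤ C/N. -/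
open scoped RealInnerProductSpace
open Real MeasureTheory

/-!
With `x = |p|²` the summand is `g(x, t) = t + x - √(x² + 2xt) - t²/(2x)` at `t = Φ(p)` and
`t = Φ₀`. Rationalising gives `|g(x, t)| ≤ t³/(2x²)` and `|∂ₜ g(x, t)| ≤ 3t²/(2x²)`. For
`x ≤ N²` the mean value theorem and `|Φ(p) - Φ₀| ≤ Kx/N²` bound the difference by
`3K³/(2xN²)`, for `x ≥ N²` the cubic bound gives `K³/x²`; both are at most
`3K³/(x(x + N²))`. The lattice points of sup-norm `m ≥ 1` are at most `26m²` in number and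
satisfy `|p| ≥ m`, so the sum is at most `104 · 3K³ · ∑ₘ 1/(m² + N²)`, and this series is
`O(1/N)` by comparison with a telescoping one.
-/

open Finset

noncomputable def bogoliubovTerm (x t : ℝ) : ℝ :=
  t + x - √(x ^ 2 + 2 * x * t) - t ^ 2 / (2 * x)

section BogoliubovTerm

variable {x t : ℝ}

lemma le_sqrt_sq_add_two_mul_mul (hx : 0 ≤ x) (ht : 0 ≤ t) : x ≤ √(x ^ 2 + 2 * x * t) :=
  Real.le_sqrt_of_sq_le (by nlinarith)

lemma sqrt_sq_add_two_mul_mul_le (hxt : 0 ≤ x + t) : √(x ^ 2 + 2 * x * t) ≤ x + t :=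
  Real.sqrt_le_iff.mpr ⟨hxt, by nlinarith [sq_nonneg t]⟩

lemma abs_bogoliubovTerm_le (hx : 0 < x) (ht : 0 ≤ t) :
    |bogoliubovTerm x t| ≤ t ^ 3 / (2 * x ^ 2) := by
  rw [bogoliubovTerm]
  set s := √(x ^ 2 + 2 * x * t)
  have hs2 : s ^ 2 = x ^ 2 + 2 * x * t := Real.sq_sqrt (by positivity)
  have hxs := le_sqrt_sq_add_two_mul_mul hx.le ht
  have hsx := sqrt_sq_add_two_mul_mul_le (x := x) (t := t) (by linarith)
  -- rationalising `x + t - s` leaves a numerator of size `t ^ 3`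
  have hrepr : t + x - s - t ^ 2 / (2 * x) = t ^ 2 * (x - t - s) / (2 * x * (x + t + s)) := by
    rw [eq_div_iff (by nlinarith)]
    field_simp
    linear_combination (-2 * x) * hs2
  rw [hrepr, abs_div, abs_of_pos (a := 2 * x * _) (by nlinarith), abs_mul,
    abs_of_nonneg (sq_nonneg t)]
  have hnum : |x - t - s| ≤ 2 * t := abs_le.mpr ⟨by linarith, by linarith⟩
  calc t ^ 2 * |x - t - s| / (2 * x * (x + t + s)) ≤ t ^ 2 * (2 * t) / (2 * x * (2 * x)) := by
        gcongr
        linarith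
    _ = t ^ 3 / (2 * x ^ 2) := by field_simp

lemma hasDerivAt_bogoliubovTerm (hx : 0 < x) (ht : 0 ≤ t) :
    HasDerivAt (bogoliubovTerm x) (1 - x / √(x ^ 2 + 2 * x * t) - t / x) t := by
  have hpos : 0 < x ^ 2 + 2 * x * t := by positivity
  have hsqrt : HasDerivAt (fun u => √(x ^ 2 + 2 * x * u))
      (2 * x / (2 * √(x ^ 2 + 2 * x * t))) t := by
    simpa using ((hasDerivAt_id t).const_mul (2 * x)).const_add (x ^ 2) |>.sqrt hpos.ne'
  have h := (((hasDerivAt_id' t).add_const x).sub hsqrt).sub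
    ((hasDerivAt_pow 2 t).div_const (2 * x))
  refine h.congr_deriv ?_
  have : 0 < √(x ^ 2 + 2 * x * t) := Real.sqrt_pos.mpr hpos
  field_simp
  norm_num
  ring

lemma abs_deriv_bogoliubovTerm_le (hx : 0 < x) (ht : 0 ≤ t) :
    |1 - x / √(x ^ 2 + 2 * x * t) - t / x| ≤ 3 * t ^ 2 / (2 * x ^ 2) := by
  set s := √(x ^ 2 + 2 * x * t)
  have hs2 : s ^ 2 = x ^ 2 + 2 * x * t := Real.sq_sqrt (by positivity)
  have hxs := le_sqrt_sq_add_two_mul_mul hx.le ht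
  have hsx := sqrt_sq_add_two_mul_mul_le (x := x) (t := t) (by linarith)
  have hs : 0 < s := hx.trans_le hxs
  have hrepr : 1 - x / s - t / x = t * (x - 2 * t - s) / (s * (s + x)) := by
    rw [eq_div_iff (by positivity)]
    field_simp
    linear_combination (x - t) * hs2
  rw [hrepr, abs_div, abs_of_pos (a := s * _) (by positivity), abs_mul, abs_of_nonneg ht]
  have hnum : |x - 2 * t - s| ≤ 3 * t := abs_le.mpr ⟨by linarith, by linarith⟩
  calc t * |x - 2 * t - s| / (s * (s + x)) ≤ t * (3 * t) / (x * (x + x)) := by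
        gcongr
    _ = 3 * t ^ 2 / (2 * x ^ 2) := by field_simp; ring

lemma abs_bogoliubovTerm_sub_le_mul {K a b : ℝ} (hx : 0 < x) (ha : a ∈ Set.Icc 0 K)
    (hb : b ∈ Set.Icc 0 K) :
    |bogoliubovTerm x a - bogoliubovTerm x b| ≤ 3 * K ^ 2 / (2 * x ^ 2) * |a - b| := by
  refine Convex.norm_image_sub_le_of_norm_hasDerivWithin_le
    (fun t ht => (hasDerivAt_bogoliubovTerm hx ht.1).hasDerivWithinAt)
    (fun t ht => (abs_deriv_bogoliubovTerm_le hx ht.1).trans ?_) (convex_Icc 0 K) hb ha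
  gcongr
  exacts [ht.1, ht.2]

end BogoliubovTerm

lemma abs_bogoliubovTerm_sub_le {x K N a b : ℝ} (hx : 0 < x) (hN : 0 < N)
    (ha : a ∈ Set.Icc 0 K) (hb : b ∈ Set.Icc 0 K) (hab : |a - b| ≤ K * x / N ^ 2) :
    |bogoliubovTerm x a - bogoliubovTerm x b| ≤ 3 * K ^ 3 / (x * (x + N ^ 2)) := by
  have hK : 0 ≤ K := ha.1.trans ha.2
  rcases le_total x (N ^ 2) with hxN | hNx
  · calc |bogoliubovTerm x a - bogoliubovTerm x b|
        ≤ 3 * K ^ 2 / (2 * x ^ 2) * (K * x / N ^ 2) :=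
          (abs_bogoliubovTerm_sub_le_mul hx ha hb).trans (by gcongr)
      _ = 3 * K ^ 3 / (x * (2 * N ^ 2)) := by field_simp
      _ ≤ 3 * K ^ 3 / (x * (x + N ^ 2)) := by gcongr; linarith
  · have hcube {t : ℝ} (ht : t ∈ Set.Icc 0 K) : |bogoliubovTerm x t| ≤ K ^ 3 / (2 * x ^ 2) :=
      (abs_bogoliubovTerm_le hx ht.1).trans (by gcongr; exacts [ht.1, ht.2])
    calc |bogoliubovTerm x a - bogoliubovTerm x b|
        ≤ K ^ 3 / (2 * x ^ 2) + K ^ 3 / (2 * x ^ 2) :=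
          (abs_sub _ _).trans (add_le_add (hcube ha) (hcube hb))
      _ = 2 * K ^ 3 / (x * (2 * x)) := by field_simp; ring
      _ ≤ 3 * K ^ 3 / (x * (x + N ^ 2)) := by gcongr <;> linarith

section InverseSquareSeries

variable {N : ℝ}

lemma sum_range_one_div_sq_add_sq_le (hN : 1 ≤ N) (n : ℕ) :
    ∑ m ∈ range n, 1 / ((m : ℝ) ^ 2 + N ^ 2) ≤ 4 / N := by
  -- `1 / (m² + N²) ≤ 2 / ((m + N)² - 1/4)`, which telescopes
  set f : ℕ → ℝ := fun m => 2 / (m + (N - 1 / 2))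
  have hterm (m : ℕ) : 1 / ((m : ℝ) ^ 2 + N ^ 2) ≤ f m - f (m + 1) := by
    have hm : (0 : ℝ) ≤ m := m.cast_nonneg
    simp only [f, Nat.cast_succ]
    rw [div_sub_div _ _ (by linarith) (by linarith), div_le_div_iff₀ (by positivity) (by nlinarith)]
    nlinarith [sq_nonneg ((m : ℝ) - N)]
  calc ∑ m ∈ range n, 1 / ((m : ℝ) ^ 2 + N ^ 2) ≤ ∑ m ∈ range n, (f m - f (m + 1)) :=
        sum_le_sum fun m _ => hterm m
    _ = f 0 - f n := sum_range_sub' f n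
    _ ≤ f 0 := sub_le_self _ (div_nonneg zero_le_two (by linarith [n.cast_nonneg (α := ℝ)]))
    _ ≤ 4 / N := by
        simp only [f, Nat.cast_zero, zero_add]
        rw [div_le_div_iff₀ (by linarith) (by linarith)]
        linarith

lemma summable_one_div_sq_add_sq (hN : 1 ≤ N) : Summable fun m : ℕ => 1 / ((m : ℝ) ^ 2 + N ^ 2) :=
  summable_of_sum_range_le (fun _ => by positivity) (sum_range_one_div_sq_add_sq_le hN)

lemma tsum_one_div_sq_add_sq_le (hN : 1 ≤ N) : ∑' m : ℕ, 1 / ((m : ℝ) ^ 2 + N ^ 2) ≤ 4 / N :=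
  Real.tsum_le_of_sum_range_le (fun _ => by positivity) (sum_range_one_div_sq_add_sq_le hN)

end InverseSquareSeries

lemma tsum_le_tsum_of_sum_fiber_le {ι β : Type*} [DecidableEq β] {f : ι → ℝ} {w : β → ℝ}
    (r : ι → β) (hw : Summable w) (hfiber : ∀ b (s : Finset ι), ∑ i ∈ s with r i = b, f i ≤ w b) :
    ∑' i, f i ≤ ∑' b, w b := by
  have hw0 (b : β) : 0 ≤ w b := by simpa using hfiber b ∅
  refine tsum_le_of_sum_le' (tsum_nonneg hw0) fun s => ?_
  calc ∑ i ∈ s, f i = ∑ b ∈ s.image r, ∑ i ∈ s with r i = b, f i :=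
        (sum_fiberwise_of_maps_to (fun i hi => mem_image_of_mem r hi) f).symm
    _ ≤ ∑ b ∈ s.image r, w b := sum_le_sum fun b _ => hfiber b s
    _ ≤ ∑' b, w b := hw.sum_le_tsum _ fun b _ => hw0 b

section SupNatAbs

variable {ι : Type*} [Fintype ι]

def supNatAbs (p : ι → ℤ) : ℕ := univ.sup fun i => (p i).natAbs

lemma supNatAbs_le_iff {p : ι → ℤ} {n : ℕ} : supNatAbs p ≤ n ↔ ∀ i, (p i).natAbs ≤ n := by
  simp [supNatAbs]

lemma supNatAbs_eq_zero_iff {p : ι → ℤ} : supNatAbs p = 0 ↔ p = 0 := by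
  rw [← Nat.le_zero, supNatAbs_le_iff, funext_iff]
  simp

lemma exists_natAbs_eq_supNatAbs [Nonempty ι] (p : ι → ℤ) : ∃ i, (p i).natAbs = supNatAbs p :=
  let ⟨i, _, hi⟩ := exists_mem_eq_sup univ univ_nonempty fun i => (p i).natAbs
  ⟨i, hi.symm⟩

variable [DecidableEq ι]

lemma mem_piFinset_Icc_iff {p : ι → ℤ} {n : ℕ} :
    p ∈ Fintype.piFinset (fun _ => Icc (-(n : ℤ)) n) ↔ supNatAbs p ≤ n := by
  simp only [Fintype.mem_piFinset, mem_Icc, supNatAbs_le_iff]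
  exact forall_congr' fun i => by omega

lemma card_filter_supNatAbs_eq_succ_le (s : Finset (ι → ℤ)) (k : ℕ) :
    #{p ∈ s | supNatAbs p = k + 1} ≤
      (2 * (k + 1) + 1) ^ Fintype.card ι - (2 * k + 1) ^ Fintype.card ι := by
  set box : ℕ → Finset (ι → ℤ) := fun n => Fintype.piFinset fun _ => Icc (-(n : ℤ)) n
  have hcard (n : ℕ) : #(box n) = (2 * n + 1) ^ Fintype.card ι := by
    simp only [box, Fintype.card_piFinset, Int.card_Icc, prod_const, card_univ]
    congr 1
    omega
  have hshell : {p ∈ s | supNatAbs p = k + 1} ⊆ box (k + 1) \ box k := fun p hp => by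
    simp only [box, mem_sdiff, mem_piFinset_Icc_iff, (mem_filter.1 hp).2]
    omega
  have hmono : box k ⊆ box (k + 1) := fun p hp => by
    simp only [box, mem_piFinset_Icc_iff] at hp ⊢
    omega
  calc #{p ∈ s | supNatAbs p = k + 1} ≤ #(box (k + 1) \ box k) := card_le_card hshell
    _ = (2 * (k + 1) + 1) ^ Fintype.card ι - (2 * k + 1) ^ Fintype.card ι := by
        rw [card_sdiff_of_subset hmono, hcard, hcard]

end SupNatAbs

lemma card_filter_supNatAbs_eq_succ_le_fin_three (s : Finset (Fin 3 → ℤ)) (k : ℕ) :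
    #{p ∈ s | supNatAbs p = k + 1} ≤ 26 * (k + 1) ^ 2 := by
  refine (card_filter_supNatAbs_eq_succ_le s k).trans ?_
  rw [Fintype.card_fin, tsub_le_iff_right]
  ring_nf
  omega

lemma supNatAbs_le_norm_lat (p : Fin 3 → ℤ) : (supNatAbs p : ℝ) ≤ ‖lat p‖ := by
  obtain ⟨i, hi⟩ := exists_natAbs_eq_supNatAbs p
  calc (supNatAbs p : ℝ) = |(p i : ℝ)| := by rw [← hi, Nat.cast_natAbs, Int.cast_abs]
    _ ≤ 2 * π * |(p i : ℝ)| := le_mul_of_one_le_left (abs_nonneg _) (by linarith [pi_gt_three])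
    _ = ‖(lat p).ofLp i‖ := by simp [lat, abs_of_pos pi_pos]
    _ ≤ ‖lat p‖ := PiLp.norm_apply_le _ i

lemma sum_filter_supNatAbs_eq_succ_le {f : (Fin 3 → ℤ) → ℝ} {A N : ℝ} (hA : 0 ≤ A)
    (hf : ∀ p ≠ 0, f p ≤ A / (‖lat p‖ ^ 2 * (‖lat p‖ ^ 2 + N ^ 2))) (s : Finset (Fin 3 → ℤ))
    (k : ℕ) :
    ∑ p ∈ s with supNatAbs p = k + 1, f p ≤ 26 * A * (1 / (((k + 1 : ℕ) : ℝ) ^ 2 + N ^ 2)) := by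
  set m : ℝ := ((k + 1 : ℕ) : ℝ)
  have hm : 1 ≤ m := by simp [m]
  have hterm : ∀ p ∈ {p ∈ s | supNatAbs p = k + 1}, f p ≤ A / (m ^ 2 * (m ^ 2 + N ^ 2)) := by
    intro p hp
    have hsup : supNatAbs p = k + 1 := (mem_filter.1 hp).2
    have hmp : m ≤ ‖lat p‖ := by simpa only [m, ← hsup] using supNatAbs_le_norm_lat p
    refine (hf p fun h => by simp [h, supNatAbs_eq_zero_iff.2] at hsup).trans ?_
    gcongr
  calc ∑ p ∈ s with supNatAbs p = k + 1, f p
      ≤ #{p ∈ s | supNatAbs p = k + 1} • (A / (m ^ 2 * (m ^ 2 + N ^ 2))) :=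
        sum_le_card_nsmul _ _ _ hterm
    _ ≤ (26 * m ^ 2) * (A / (m ^ 2 * (m ^ 2 + N ^ 2))) := by
        rw [nsmul_eq_mul]
        gcongr
        simp only [m]
        exact_mod_cast card_filter_supNatAbs_eq_succ_le_fin_three s k
    _ = 26 * A * (1 / (m ^ 2 + N ^ 2)) := by field_simp

lemma tsum_le_of_le_div_norm_lat_sq {f : (Fin 3 → ℤ) → ℝ} {A N : ℝ} (hN : 1 ≤ N) (hA : 0 ≤ A)
    (hf0 : f 0 = 0) (hf : ∀ p ≠ 0, f p ≤ A / (‖lat p‖ ^ 2 * (‖lat p‖ ^ 2 + N ^ 2))) :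
    ∑' p, f p ≤ 104 * A / N := by
  have hfiber (n : ℕ) (s : Finset (Fin 3 → ℤ)) :
      ∑ p ∈ s with supNatAbs p = n, f p ≤ 26 * A * (1 / ((n : ℝ) ^ 2 + N ^ 2)) := by
    rcases n with _ | k
    · rw [sum_eq_zero fun p hp => by rw [supNatAbs_eq_zero_iff.1 (mem_filter.1 hp).2, hf0]]
      positivity
    · exact sum_filter_supNatAbs_eq_succ_le hA hf s k
  calc ∑' p, f p ≤ ∑' n : ℕ, 26 * A * (1 / ((n : ℝ) ^ 2 + N ^ 2)) :=
        tsum_le_tsum_of_sum_fiber_le supNatAbs ((summable_one_div_sq_add_sq hN).mul_left _) hfiber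
    _ = 26 * A * ∑' n : ℕ, 1 / ((n : ℝ) ^ 2 + N ^ 2) := tsum_mul_left
    _ ≤ 26 * A * (4 / N) := by gcongr; exact tsum_one_div_sq_add_sq_le hN
    _ = 104 * A / N := by ring

/-- For every `K > 0` there exists `C > 0` such that for all `N ≥ 1`:
if `0 ≤ Φ(p) ≤ K` on `Λ*₊`, `0 ≤ Φ₀ ≤ K`, and `|Φ(p) − Φ₀| ≤ K|p|²/N²`, then the sum
over `p ∈ Λ*₊` of the absolute difference of the Bogoliubov energy summands
`Φ + |p|² − √(|p|⁴ + 2|p|²Φ) − Φ²/(2|p|²)` at `Φ(p)` and at `Φ₀` is at most `C/N`. -/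
theorem bogoliubov_energy_sum_comparison (K : ℝ) (hK : 0 < K) :
    ∃ C > 0, ∀ N : ℝ, 1 ≤ N → ∀ Φ : (Fin 3 → ℤ) → ℝ, ∀ Φ₀ : ℝ,
      (∀ p : Fin 3 → ℤ, p ≠ 0 → 0 ≤ Φ p) →
      (∀ p : Fin 3 → ℤ, p ≠ 0 → Φ p ≤ K) →
      0 ≤ Φ₀ → Φ₀ ≤ K →
      (∀ p : Fin 3 → ℤ, p ≠ 0 → |Φ p - Φ₀| ≤ K * ‖lat p‖ ^ 2 / N ^ 2) →
      (∑' p : Fin 3 → ℤ,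
          if p ≠ 0 then
            |(Φ p + ‖lat p‖ ^ 2 - Real.sqrt (‖lat p‖ ^ 4 + 2 * ‖lat p‖ ^ 2 * Φ p)
                - Φ p ^ 2 / (2 * ‖lat p‖ ^ 2))
              - (Φ₀ + ‖lat p‖ ^ 2 - Real.sqrt (‖lat p‖ ^ 4 + 2 * ‖lat p‖ ^ 2 * Φ₀)
                - Φ₀ ^ 2 / (2 * ‖lat p‖ ^ 2))|
          else 0)
        ≤ C / N := by
  refine ⟨104 * (3 * K ^ 3), by positivity, fun N hN Φ Φ₀ hΦ0 hΦK hΦ₀0 hΦ₀K hdiff => ?_⟩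
  refine tsum_le_of_le_div_norm_lat_sq hN (by positivity) (if_neg (not_not.2 rfl)) fun p hp => ?_
  have hx : 0 < ‖lat p‖ ^ 2 := by
    have hsup : (0 : ℝ) < supNatAbs p :=
      Nat.cast_pos.2 (Nat.pos_of_ne_zero (supNatAbs_eq_zero_iff.not.2 hp))
    exact pow_pos (hsup.trans_le (supNatAbs_le_norm_lat p)) 2
  rw [if_pos hp, show ‖lat p‖ ^ 4 = (‖lat p‖ ^ 2) ^ 2 by ring]
  exact abs_bogoliubovTerm_sub_le hx (by linarith) ⟨hΦ0 p hp, hΦK p hp⟩ ⟨hΦ₀0, hΦ₀K⟩ (hdiff p hp)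
end

section
/- For all K₁, K₂ > 0 there exists a constant C > 0 such that the following holds for every real N ≥ 1: if W : Λ* → ℝ satisfies |W(p)| ≤ K₁ for all p, and η : Λ*₊ → ℝ satisfies |η(s)| ≤ K₂ |s|^{−2} for all s ∈ Λ*₊ and Σ_{s ∈ Λ*₊} |η(s)| ≤ K₂ N, then Σ_{v ∈ Λ*₊} sup_{r ∈ Λ*₊} ( N^{−1/2} Σ_{s ∈ Λ*₊, s ≠ −v} |W(r − s)| · |η(s)| · |η(s + v)| )² ≤ C. -/
open scoped RealInnerProductSpace
open Real MeasureTheory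

/-!
With `a = |η|` off the origin, every inner sum is at most `K₁ · (a ⋆ a)(v)`, where
`(a ⋆ a)(v) = ∑ₛ a(s) a(s+v)` is the autocorrelation of `a`. Two bounds on it suffice:
`∑ᵥ (a ⋆ a)(v) = (∑ a)² ≤ K₂² N²`, and the decay `(a ⋆ a)(v) ≲ K₂² / |v|`, obtained by splitting
according to which of `s`, `s + v` is at distance `≳ |v|` from the origin and counting lattice
points shell by shell. For `|v| ≤ N` the decay gives `(a ⋆ a)(v)² ≲ K₂⁴ |v|⁻²`, whose sum over
the ball of radius `N` is `≲ K₂⁴ N`; for `|v| > N` it gives `(a ⋆ a)(v)² ≲ K₂² N⁻¹ (a ⋆ a)(v)`,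
whose sum is `≲ K₂⁴ N`. The prefactor `N⁻¹` of the squared supremum cancels the `N`.
-/

open Finset

lemma Finset.sum_ite_mem_le {ι : Type*} [DecidableEq ι] {g : ι → ℝ} (s t : Finset ι)
    (hg : ∀ i ∈ t, 0 ≤ g i) : ∑ i ∈ s, (if i ∈ t then g i else 0) ≤ ∑ i ∈ t, g i := by
  rw [sum_ite_mem]
  exact sum_le_sum_of_subset_of_nonneg inter_subset_right fun i hi _ => hg i hi

section Autocorrelation

variable {G : Type*} [AddGroup G]

noncomputable def autocorr (a : G → ℝ) (v : G) : ℝ := ∑' s, a s * a (s + v)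

variable {a : G → ℝ}

lemma autocorr_nonneg (ha : 0 ≤ a) : 0 ≤ autocorr a := fun _ =>
  tsum_nonneg fun s => mul_nonneg (ha s) (ha _)

lemma summable_mul_apply_add (ha : 0 ≤ a) (hs : Summable a) :
    Summable fun p : G × G => a p.1 * a (p.1 + p.2) :=
  (Equiv.prodShear (Equiv.refl G) Equiv.addLeft).summable_iff.mpr (hs.mul_of_nonneg hs ha ha)

lemma summable_mul_apply_add_left (ha : 0 ≤ a) (hs : Summable a) (v : G) :
    Summable fun s => a s * a (s + v) :=
  (summable_mul_apply_add ha hs).prod_symm.prod_factor v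

lemma summable_autocorr (ha : 0 ≤ a) (hs : Summable a) : Summable (autocorr a) :=
  (summable_mul_apply_add ha hs).prod_symm.prod

lemma tsum_autocorr (ha : 0 ≤ a) (hs : Summable a) :
    ∑' v, autocorr a v = (∑' s, a s) ^ 2 := by
  rw [sq, hs.tsum_mul_tsum hs (hs.mul_of_nonneg hs ha ha),
    ← (Equiv.prodShear (Equiv.refl G) Equiv.addLeft).tsum_eq]
  exact (Summable.tsum_comm (f := fun s v => a s * a (s + v)) (summable_mul_apply_add ha hs)).trans
    (summable_mul_apply_add ha hs).tsum_prod.symm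

end Autocorrelation

section SupremumBound

variable {G : Type*} [AddGroup G] [DecidableEq G]

def puncturedAbs (η : G → ℝ) (s : G) : ℝ := if s ≠ 0 then |η s| else 0

lemma puncturedAbs_nonneg (η : G → ℝ) : 0 ≤ puncturedAbs η := fun s => by
  unfold puncturedAbs; split_ifs <;> positivity

lemma puncturedAbs_zero (η : G → ℝ) : puncturedAbs η 0 = 0 := by simp [puncturedAbs]

lemma tsum_ite_le_mul_autocorr {W η : G → ℝ} {K₁ : ℝ} (hW : ∀ p, |W p| ≤ K₁) {v : G}
    (hs : Summable fun s => puncturedAbs η s * puncturedAbs η (s + v)) (r : G) :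
    ∑' s, (if s ≠ 0 ∧ s ≠ -v then |W (r - s)| * |η s| * |η (s + v)| else 0)
      ≤ K₁ * autocorr (puncturedAbs η) v := by
  have hterm (s : G) : (if s ≠ 0 ∧ s ≠ -v then |W (r - s)| * |η s| * |η (s + v)| else 0)
      ≤ K₁ * (puncturedAbs η s * puncturedAbs η (s + v)) := by
    have hK₁ : 0 ≤ K₁ := (abs_nonneg _).trans (hW 0)
    split_ifs with h
    · have hsv : s + v ≠ 0 := fun h' => h.2 (eq_neg_of_add_eq_zero_left h')
      simp only [puncturedAbs, if_pos h.1, if_pos hsv, ← mul_assoc]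
      gcongr
      exact hW _
    · exact mul_nonneg hK₁ (mul_nonneg (puncturedAbs_nonneg η s) (puncturedAbs_nonneg η _))
  have hterm0 (s : G) : 0 ≤ (if s ≠ 0 ∧ s ≠ -v then |W (r - s)| * |η s| * |η (s + v)| else 0) := by
    split_ifs <;> positivity
  rw [autocorr, ← tsum_mul_left]
  exact (hs.mul_left K₁).of_nonneg_of_le hterm0 hterm |>.tsum_le_tsum hterm (hs.mul_left K₁)

lemma sq_iSup_le_mul_sq_autocorr {W η : G → ℝ} {K₁ N : ℝ} (hW : ∀ p, |W p| ≤ K₁) (hN : 0 < N)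
    {v : G} (hs : Summable fun s => puncturedAbs η s * puncturedAbs η (s + v)) :
    (⨆ r : {r : G // r ≠ 0}, N ^ (-(1 : ℝ) / 2) *
        ∑' s, if s ≠ 0 ∧ s ≠ -v then |W (r.1 - s)| * |η s| * |η (s + v)| else 0) ^ 2
      ≤ N⁻¹ * K₁ ^ 2 * autocorr (puncturedAbs η) v ^ 2 := by
  have hpow : (N ^ (-(1 : ℝ) / 2)) ^ 2 = N⁻¹ := by
    rw [← rpow_natCast, ← rpow_mul hN.le]
    norm_num [rpow_neg_one]
  have hK₁ : 0 ≤ K₁ := (abs_nonneg _).trans (hW 0)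
  have hauto : 0 ≤ autocorr (puncturedAbs η) v := autocorr_nonneg (puncturedAbs_nonneg η) v
  have hsup0 : 0 ≤ ⨆ r : {r : G // r ≠ 0}, N ^ (-(1 : ℝ) / 2) *
      ∑' s, if s ≠ 0 ∧ s ≠ -v then |W (r.1 - s)| * |η s| * |η (s + v)| else 0 :=
    Real.iSup_nonneg fun r => mul_nonneg (rpow_nonneg hN.le _) (tsum_nonneg fun s => by
      split_ifs <;> positivity)
  have hsup : (⨆ r : {r : G // r ≠ 0}, N ^ (-(1 : ℝ) / 2) *
      ∑' s, if s ≠ 0 ∧ s ≠ -v then |W (r.1 - s)| * |η s| * |η (s + v)| else 0)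
        ≤ N ^ (-(1 : ℝ) / 2) * (K₁ * autocorr (puncturedAbs η) v) :=
    Real.iSup_le (fun r => by gcongr; exact tsum_ite_le_mul_autocorr hW hs r.1) (by positivity)
  calc _ ≤ (N ^ (-(1 : ℝ) / 2) * (K₁ * autocorr (puncturedAbs η) v)) ^ 2 :=
        pow_le_pow_left₀ hsup0 hsup 2
    _ = N⁻¹ * K₁ ^ 2 * autocorr (puncturedAbs η) v ^ 2 := by rw [mul_pow, hpow]; ring

end SupremumBound

def supNorm (k : Fin 3 → ℤ) : ℕ := univ.sup fun i => (k i).natAbs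

lemma supNorm_le_iff {k : Fin 3 → ℤ} {j : ℕ} : supNorm k ≤ j ↔ ∀ i, (k i).natAbs ≤ j := by
  simp [supNorm]

lemma supNorm_pos {k : Fin 3 → ℤ} (hk : k ≠ 0) : 0 < supNorm k := by
  by_contra! h
  exact hk (funext fun i => by simpa using supNorm_le_iff.mp h i)

lemma supNorm_sub_le (x y : Fin 3 → ℤ) : supNorm (x - y) ≤ supNorm x + supNorm y :=
  supNorm_le_iff.mpr fun i => (Int.natAbs_sub_le _ _).trans
    (add_le_add (supNorm_le_iff.mp le_rfl i) (supNorm_le_iff.mp le_rfl i))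

lemma supNorm_le_norm_lat (k : Fin 3 → ℤ) : (supNorm k : ℝ) ≤ ‖lat k‖ := by
  obtain ⟨i, -, hi⟩ := exists_mem_eq_sup univ univ_nonempty fun i => (k i).natAbs
  calc (supNorm k : ℝ) = |(k i : ℝ)| := by rw [supNorm, hi, Nat.cast_natAbs, Int.cast_abs]
    _ ≤ 2 * π * |(k i : ℝ)| :=
      le_mul_of_one_le_left (abs_nonneg _) (by linarith [pi_gt_three])
    _ = ‖lat k i‖ := by simp [lat, abs_of_pos pi_pos]
    _ ≤ ‖lat k‖ := PiLp.norm_apply_le _ _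

lemma puncturedAbs_le_div_supNorm_sq {η : (Fin 3 → ℤ) → ℝ} {K : ℝ} (hK : 0 ≤ K)
    (hη : ∀ s, s ≠ 0 → |η s| ≤ K / ‖lat s‖ ^ 2) {k : Fin 3 → ℤ} (hk : k ≠ 0) :
    puncturedAbs η k ≤ K / (supNorm k : ℝ) ^ 2 := by
  have hpos : (0 : ℝ) < supNorm k := by exact_mod_cast supNorm_pos hk
  rw [puncturedAbs, if_pos hk]
  exact (hη k hk).trans (div_le_div_of_nonneg_left hK (by positivity)
    (pow_le_pow_left₀ hpos.le (supNorm_le_norm_lat k) 2))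

noncomputable def supBall (j : ℕ) : Finset (Fin 3 → ℤ) := Icc (fun _ => -(j : ℤ)) (fun _ => (j : ℤ))

lemma mem_supBall {k : Fin 3 → ℤ} {j : ℕ} : k ∈ supBall j ↔ supNorm k ≤ j := by
  simp only [supBall, mem_Icc, Pi.le_def, supNorm_le_iff, ← forall_and]
  exact forall_congr' fun i => by omega

lemma card_supBall (j : ℕ) : #(supBall j) = (2 * j + 1) ^ 3 := by
  simp only [supBall, Pi.card_Icc, Int.card_Icc, prod_const, card_univ, Fintype.card_fin]
  congr 1
  omega

lemma card_filter_supNorm_eq_le (F : Finset (Fin 3 → ℤ)) {j : ℕ} (hj : 0 < j) :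
    #{k ∈ F | supNorm k = j} ≤ 26 * j ^ 2 := by
  have hsub : {k ∈ F | supNorm k = j} ⊆ supBall j \ supBall (j - 1) := fun k hk => by
    simp only [mem_filter] at hk
    simp only [mem_sdiff, mem_supBall]
    omega
  have hball : supBall (j - 1) ⊆ supBall j := fun k hk => by
    rw [mem_supBall] at *
    omega
  refine (card_le_card hsub).trans ?_
  rw [card_sdiff_of_subset hball, card_supBall, card_supBall]
  obtain ⟨n, rfl⟩ : ∃ n, j = n + 1 := ⟨j - 1, by omega⟩
  have : (2 * (n + 1) + 1) ^ 3 = (2 * n + 1) ^ 3 + (24 * (n + 1) ^ 2 + 2) := by ring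
  rw [Nat.add_sub_cancel, this, Nat.add_sub_cancel_left]
  nlinarith

lemma sum_comp_supNorm_le {f : ℕ → ℝ} (hf : 0 ≤ f) (hf0 : f 0 = 0) {B : ℝ}
    (hB : ∀ n, ∑ j ∈ range n, (j : ℝ) ^ 2 * f j ≤ B) (F : Finset (Fin 3 → ℤ)) :
    ∑ k ∈ F, f (supNorm k) ≤ 26 * B := by
  classical
  have hshell (j : ℕ) : #{k ∈ F | supNorm k = j} • f j ≤ 26 * ((j : ℝ) ^ 2 * f j) := by
    rcases Nat.eq_zero_or_pos j with rfl | hj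
    · simp [hf0]
    rw [nsmul_eq_mul, ← mul_assoc]
    gcongr
    · exact hf j
    · exact_mod_cast card_filter_supNorm_eq_le F hj
  have himage : F.image supNorm ⊆ range (F.sup supNorm + 1) := fun j hj => by
    obtain ⟨k, hk, rfl⟩ := mem_image.mp hj
    exact mem_range_succ_iff.mpr (le_sup hk)
  calc ∑ k ∈ F, f (supNorm k) = ∑ j ∈ F.image supNorm, #{k ∈ F | supNorm k = j} • f j :=
        sum_comp ..
    _ ≤ ∑ j ∈ range (F.sup supNorm + 1), 26 * ((j : ℝ) ^ 2 * f j) :=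
      (sum_le_sum fun j _ => hshell j).trans <| sum_le_sum_of_subset_of_nonneg himage
        fun j _ _ => mul_nonneg (by positivity) (mul_nonneg (by positivity) (hf j))
    _ = 26 * ∑ j ∈ range (F.sup supNorm + 1), (j : ℝ) ^ 2 * f j := (mul_sum ..).symm
    _ ≤ 26 * B := by gcongr; exact hB _

noncomputable def invSqUpTo (R : ℝ) (j : ℕ) : ℝ := if (j : ℝ) ≤ R then ((j : ℝ) ^ 2)⁻¹ else 0

lemma invSqUpTo_nonneg (R : ℝ) : 0 ≤ invSqUpTo R := fun j => by
  unfold invSqUpTo; split_ifs <;> positivity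

lemma sum_range_sq_mul_invSqUpTo_le {R : ℝ} (hR : 0 ≤ R) (n : ℕ) :
    ∑ j ∈ range n, (j : ℝ) ^ 2 * invSqUpTo R j ≤ R := by
  have hpt (j : ℕ) : (j : ℝ) ^ 2 * invSqUpTo R j ≤ if j ∈ Icc 1 ⌊R⌋₊ then 1 else 0 := by
    rcases Nat.eq_zero_or_pos j with rfl | hj
    · simp [invSqUpTo]
    unfold invSqUpTo
    split_ifs with h1 h2 h2
    · simp [hj.ne']
    · exact absurd (mem_Icc.mpr ⟨hj, Nat.le_floor h1⟩) h2
    all_goals simp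
  calc ∑ j ∈ range n, (j : ℝ) ^ 2 * invSqUpTo R j
      ≤ ∑ j ∈ range n, (if j ∈ Icc 1 ⌊R⌋₊ then 1 else 0) := sum_le_sum fun j _ => hpt j
    _ ≤ ∑ j ∈ Icc 1 ⌊R⌋₊, (1 : ℝ) := sum_ite_mem_le _ _ fun _ _ => zero_le_one
    _ ≤ R := by simpa using Nat.floor_le hR

/-- For `m ≤ x + y`, the first term of `convBound m x` bounds `x⁻² y⁻²` when `y > m / 2 ≥ x`,
the second term of each summand when both `x, y ≥ m / 2`. -/
noncomputable def convBound (m j : ℕ) : ℝ :=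
  (if j ≤ m then 4 / ((m : ℝ) ^ 2 * (j : ℝ) ^ 2) else 0) +
    (if m ≤ 2 * j then ((j : ℝ) ^ 4)⁻¹ else 0)

lemma convBound_nonneg (m : ℕ) : 0 ≤ convBound m := fun j => by
  unfold convBound; split_ifs <;> positivity

lemma convBound_zero (m : ℕ) : convBound m 0 = 0 := by simp [convBound]

lemma four_div_le_convBound {m j : ℕ} (h : j ≤ m) :
    4 / ((m : ℝ) ^ 2 * (j : ℝ) ^ 2) ≤ convBound m j := by
  unfold convBound
  rw [if_pos h, le_add_iff_nonneg_right]
  split_ifs <;> positivity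

lemma inv_pow_four_le_convBound {m j : ℕ} (h : m ≤ 2 * j) : ((j : ℝ) ^ 4)⁻¹ ≤ convBound m j := by
  unfold convBound
  rw [if_pos h, le_add_iff_nonneg_left]
  split_ifs <;> positivity

lemma inv_sq_mul_inv_sq_le_convBound {m x y : ℕ} (hx : 0 < x) (hy : 0 < y) (hm : m ≤ x + y) :
    ((x : ℝ) ^ 2)⁻¹ * ((y : ℝ) ^ 2)⁻¹ ≤ convBound m x + convBound m y := by
  wlog hxy : x ≤ y generalizing x y
  · rw [mul_comm, add_comm]
    exact this hy hx (by omega) (by omega)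
  have hxR : (0 : ℝ) < x := by exact_mod_cast hx
  have hyR : (0 : ℝ) < y := by exact_mod_cast hy
  have hy0 : 0 ≤ convBound m y := convBound_nonneg m y
  rcases le_or_gt m (2 * x) with h | h
  · have hamgm : ((x : ℝ) ^ 2)⁻¹ * ((y : ℝ) ^ 2)⁻¹ ≤ ((x : ℝ) ^ 4)⁻¹ + ((y : ℝ) ^ 4)⁻¹ := by
      have hsq (t : ℝ) : (t ^ 4)⁻¹ = ((t ^ 2)⁻¹) ^ 2 := by rw [inv_pow, ← pow_mul]
      rw [hsq, hsq]
      nlinarith [sq_nonneg (((x : ℝ) ^ 2)⁻¹ - ((y : ℝ) ^ 2)⁻¹),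
        mul_pos (inv_pos.mpr (pow_pos hxR 2)) (inv_pos.mpr (pow_pos hyR 2))]
    linarith [inv_pow_four_le_convBound h, inv_pow_four_le_convBound (m := m) (j := y) (by omega)]
  · have hnear : ((x : ℝ) ^ 2)⁻¹ * ((y : ℝ) ^ 2)⁻¹ ≤ 4 / ((m : ℝ) ^ 2 * (x : ℝ) ^ 2) := by
      have hmy : (m : ℝ) < 2 * y := by exact_mod_cast (by omega : m < 2 * y)
      have hm2 : (m : ℝ) ^ 2 ≤ 4 * (y : ℝ) ^ 2 := by nlinarith [(by positivity : (0 : ℝ) ≤ m)]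
      have hmpos : (0 : ℝ) < m := by exact_mod_cast (by omega : 0 < m)
      rw [← mul_inv, ← one_div, div_le_div_iff₀ (by positivity) (by positivity)]
      nlinarith [mul_le_mul_of_nonneg_right hm2 (sq_nonneg (x : ℝ))]
    linarith [four_div_le_convBound (m := m) (j := x) (by omega)]

lemma sum_range_sq_mul_convBound_le {m : ℕ} (hm : 0 < m) (n : ℕ) :
    ∑ j ∈ range n, (j : ℝ) ^ 2 * convBound m j ≤ 8 / m := by
  set k := (m - 1) / 2
  have hpt (j : ℕ) (hjn : j ∈ range n) : (j : ℝ) ^ 2 * convBound m j ≤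
      (if j ∈ Icc 1 m then 4 / (m : ℝ) ^ 2 else 0) +
        (if j ∈ Ioo k n then ((j : ℝ) ^ 2)⁻¹ else 0) := by
    rcases Nat.eq_zero_or_pos j with rfl | hj0
    · simp [convBound]
    have hj : (j : ℝ) ≠ 0 := by positivity
    rw [convBound, mul_add]
    gcongr
    · split_ifs with h1 h2 h2
      · exact (by field_simp : (j : ℝ) ^ 2 * (4 / ((m : ℝ) ^ 2 * (j : ℝ) ^ 2)) = _).le
      · exact absurd (mem_Icc.mpr ⟨hj0, h1⟩) h2
      all_goals simp only [mul_zero]; positivity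
    · split_ifs with h1 h2 h2
      · exact (by field_simp : (j : ℝ) ^ 2 * ((j : ℝ) ^ 4)⁻¹ = _).le
      · exact absurd (mem_Ioo.mpr ⟨by omega, mem_range.mp hjn⟩) h2
      all_goals simp only [mul_zero]; positivity
  have hk : (m : ℝ) ≤ 2 * (k + 1) := by exact_mod_cast (by omega : m ≤ 2 * (k + 1))
  calc ∑ j ∈ range n, (j : ℝ) ^ 2 * convBound m j
      ≤ ∑ j ∈ range n, ((if j ∈ Icc 1 m then 4 / (m : ℝ) ^ 2 else 0) +
          (if j ∈ Ioo k n then ((j : ℝ) ^ 2)⁻¹ else 0)) := sum_le_sum hpt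
    _ ≤ ∑ j ∈ Icc 1 m, 4 / (m : ℝ) ^ 2 + ∑ j ∈ Ioo k n, ((j : ℝ) ^ 2)⁻¹ := by
      rw [sum_add_distrib]
      gcongr <;> exact sum_ite_mem_le _ _ fun _ _ => by positivity
    _ ≤ 4 / m + 2 / (k + 1) := by
      gcongr
      · rw [sum_const, Nat.card_Icc, Nat.add_sub_cancel, nsmul_eq_mul]
        exact (by field_simp : (m : ℝ) * (4 / (m : ℝ) ^ 2) = _).le
      · exact sum_Ioo_inv_sq_le k n
    _ ≤ 8 / m := by
      rw [div_add_div _ _ (by positivity) (by positivity),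
        div_le_div_iff₀ (by positivity) (by positivity)]
      nlinarith

section AutocorrelationOnLattice

variable {a : (Fin 3 → ℤ) → ℝ}

lemma sum_convBound_supNorm_le {m : ℕ} (hm : 0 < m) (F : Finset (Fin 3 → ℤ)) :
    ∑ k ∈ F, convBound m (supNorm k) ≤ 208 / m :=
  (sum_comp_supNorm_le (convBound_nonneg m) (convBound_zero m)
    (sum_range_sq_mul_convBound_le hm) F).trans_eq (by ring)

lemma mul_apply_add_le_convBound {K : ℝ} (ha : 0 ≤ a) (ha0 : a 0 = 0) (hK : 0 ≤ K)
    (haK : ∀ k ≠ 0, a k ≤ K / (supNorm k : ℝ) ^ 2) (s v : Fin 3 → ℤ) :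
    a s * a (s + v) ≤ K ^ 2 * convBound (supNorm v) (supNorm s) +
      K ^ 2 * convBound (supNorm v) (supNorm (s + v)) := by
  have hrhs : 0 ≤ K ^ 2 * convBound (supNorm v) (supNorm s) +
      K ^ 2 * convBound (supNorm v) (supNorm (s + v)) := by
    have h₁ : 0 ≤ convBound (supNorm v) (supNorm s) := convBound_nonneg _ _
    have h₂ : 0 ≤ convBound (supNorm v) (supNorm (s + v)) := convBound_nonneg _ _
    positivity
  rcases eq_or_ne s 0 with rfl | hs
  · simpa [ha0] using hrhs
  rcases eq_or_ne (s + v) 0 with hsv | hsv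
  · simpa [hsv, ha0] using hrhs
  have htri : supNorm v ≤ supNorm (s + v) + supNorm s := by
    simpa using supNorm_sub_le (s + v) s
  calc a s * a (s + v) ≤ K / (supNorm s : ℝ) ^ 2 * (K / (supNorm (s + v) : ℝ) ^ 2) :=
        mul_le_mul (haK s hs) (haK _ hsv) (ha _) (by positivity)
    _ = K ^ 2 * (((supNorm s : ℝ) ^ 2)⁻¹ * ((supNorm (s + v) : ℝ) ^ 2)⁻¹) := by ring
    _ ≤ K ^ 2 * (convBound (supNorm v) (supNorm s) + convBound (supNorm v) (supNorm (s + v))) := by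
        gcongr
        exact inv_sq_mul_inv_sq_le_convBound (supNorm_pos hs) (supNorm_pos hsv) (by omega)
    _ = _ := mul_add ..

theorem autocorr_le_div_supNorm {K : ℝ} (ha : 0 ≤ a) (ha0 : a 0 = 0)
    (haK : ∀ k ≠ 0, a k ≤ K / (supNorm k : ℝ) ^ 2) {v : Fin 3 → ℤ} (hv : v ≠ 0) :
    autocorr a v ≤ 416 * K ^ 2 / supNorm v := by
  have hm := supNorm_pos hv
  have hK : 0 ≤ K := by
    simpa using (le_div_iff₀ (by positivity)).mp ((ha v).trans (haK v hv))
  refine Real.tsum_le_of_sum_le (fun s => mul_nonneg (ha s) (ha _)) fun F => ?_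
  calc ∑ s ∈ F, a s * a (s + v)
      ≤ K ^ 2 * ∑ s ∈ F, convBound (supNorm v) (supNorm s) +
          K ^ 2 * ∑ t ∈ F.map (addRightEmbedding v), convBound (supNorm v) (supNorm t) := by
        rw [sum_map, mul_sum, mul_sum, ← sum_add_distrib]
        exact sum_le_sum fun s _ => mul_apply_add_le_convBound ha ha0 hK haK s v
    _ ≤ K ^ 2 * (208 / supNorm v) + K ^ 2 * (208 / supNorm v) := by
        gcongr <;> exact sum_convBound_supNorm_le hm _
    _ = 416 * K ^ 2 / supNorm v := by ring

end AutocorrelationOnLattice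

lemma sum_sq_le_of_le_div_supNorm {P : (Fin 3 → ℤ) → ℝ} (hP : 0 ≤ P) (hPs : Summable P)
    {c N : ℝ} (hc : 0 ≤ c) (hN : 0 < N) (hdecay : ∀ v ≠ 0, P v ≤ c / supNorm v)
    (F : Finset (Fin 3 → ℤ)) :
    ∑ v ∈ F, (if v ≠ 0 then P v ^ 2 else 0) ≤ 26 * c ^ 2 * N + c / N * ∑' v, P v := by
  have hpt (v : Fin 3 → ℤ) :
      (if v ≠ 0 then P v ^ 2 else 0) ≤ c ^ 2 * invSqUpTo N (supNorm v) + c / N * P v := by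
    have hinv : 0 ≤ c ^ 2 * invSqUpTo N (supNorm v) :=
      mul_nonneg (sq_nonneg c) (invSqUpTo_nonneg N _)
    have hlin : 0 ≤ c / N * P v := mul_nonneg (div_nonneg hc hN.le) (hP v)
    split_ifs with hv
    · have hpos : (0 : ℝ) < supNorm v := by exact_mod_cast supNorm_pos hv
      by_cases hvN : (supNorm v : ℝ) ≤ N
      · have : P v ^ 2 ≤ c ^ 2 * invSqUpTo N (supNorm v) := by
          rw [invSqUpTo, if_pos hvN, ← div_eq_mul_inv, ← div_pow]
          exact pow_le_pow_left₀ (hP v) (hdecay v hv) 2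
        linarith
      · have : P v ≤ c / N :=
          (hdecay v hv).trans (div_le_div_of_nonneg_left hc hN (by linarith))
        have : P v ^ 2 ≤ c / N * P v := by rw [sq]; exact mul_le_mul_of_nonneg_right this (hP v)
        linarith
    · linarith
  calc ∑ v ∈ F, (if v ≠ 0 then P v ^ 2 else 0)
      ≤ c ^ 2 * ∑ v ∈ F, invSqUpTo N (supNorm v) + c / N * ∑ v ∈ F, P v := by
        rw [mul_sum, mul_sum, ← sum_add_distrib]
        exact sum_le_sum fun v _ => hpt v
    _ ≤ c ^ 2 * (26 * N) + c / N * ∑' v, P v := by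
        gcongr
        · exact sum_comp_supNorm_le (invSqUpTo_nonneg N) (by simp [invSqUpTo])
            (sum_range_sq_mul_invSqUpTo_le hN.le) F
        · exact hPs.sum_le_tsum F fun v _ => hP v
    _ = 26 * c ^ 2 * N + c / N * ∑' v, P v := by ring

/-- For all `K₁, K₂ > 0` there exists `C > 0` such that for all
`N ≥ 1`: if `|W(p)| ≤ K₁` on `Λ*`, `|η(s)| ≤ K₂|s|^{−2}` on `Λ*₊`, and
`Σ_{s ∈ Λ*₊} |η(s)| ≤ K₂N`, then
`Σ_{v ∈ Λ*₊} sup_{r ∈ Λ*₊} ( N^{−1/2} Σ_{s ∈ Λ*₊, s ≠ −v} |W(r−s)||η(s)||η(s+v)| )² ≤ C`. -/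
theorem alpha_coefficient_square_sum_bound (K₁ K₂ : ℝ) (hK₁ : 0 < K₁) (hK₂ : 0 < K₂) :
    ∃ C > 0, ∀ N : ℝ, 1 ≤ N → ∀ W η : (Fin 3 → ℤ) → ℝ,
      (∀ p : Fin 3 → ℤ, |W p| ≤ K₁) →
      (∀ s : Fin 3 → ℤ, s ≠ 0 → |η s| ≤ K₂ / ‖lat s‖ ^ 2) →
      Summable (fun s : Fin 3 → ℤ => if s ≠ 0 then |η s| else 0) →
      (∑' s : Fin 3 → ℤ, if s ≠ 0 then |η s| else 0) ≤ K₂ * N →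
      (∑' v : Fin 3 → ℤ,
          if v ≠ 0 then
            (⨆ r : {r : Fin 3 → ℤ // r ≠ 0},
                N ^ (-(1 : ℝ) / 2) *
                  ∑' s : Fin 3 → ℤ,
                    if s ≠ 0 ∧ s ≠ -v then |W (r.1 - s)| * |η s| * |η (s + v)| else 0) ^ 2
          else 0)
        ≤ C := by
  refine ⟨K₁ ^ 2 * K₂ ^ 4 * (26 * 416 ^ 2 + 416), by positivity, ?_⟩
  intro N hN W η hW hη hsum hsumN
  have hN0 : 0 < N := one_pos.trans_le hN
  set a := puncturedAbs η
  have ha : 0 ≤ a := puncturedAbs_nonneg η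
  have hdecay (v : Fin 3 → ℤ) (hv : v ≠ 0) : autocorr a v ≤ 416 * K₂ ^ 2 / supNorm v :=
    autocorr_le_div_supNorm ha (puncturedAbs_zero η)
      (fun _ hk => puncturedAbs_le_div_supNorm_sq hK₂.le hη hk) hv
  have htotal : ∑' v, autocorr a v ≤ (K₂ * N) ^ 2 := by
    rw [tsum_autocorr ha hsum]
    exact pow_le_pow_left₀ (tsum_nonneg ha) hsumN 2
  refine Real.tsum_le_of_sum_le (fun v => by split_ifs <;> positivity) fun F => ?_
  calc _ ≤ ∑ v ∈ F, N⁻¹ * K₁ ^ 2 * (if v ≠ 0 then autocorr a v ^ 2 else 0) := by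
        refine sum_le_sum fun v _ => ?_
        split_ifs
        · exact sq_iSup_le_mul_sq_autocorr hW hN0 (summable_mul_apply_add_left ha hsum v)
        · simp
    _ ≤ N⁻¹ * K₁ ^ 2 * (26 * (416 * K₂ ^ 2) ^ 2 * N + 416 * K₂ ^ 2 / N * (K₂ * N) ^ 2) := by
        rw [← mul_sum]
        gcongr
        refine (sum_sq_le_of_le_div_supNorm (autocorr_nonneg ha) (summable_autocorr ha hsum)
          (by positivity) hN0 hdecay F).trans ?_
        gcongr
    _ = K₁ ^ 2 * K₂ ^ 4 * (26 * 416 ^ 2 + 416) := by field_simp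
end
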